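/- arXiv:2103.07459 — 2 statements merged into one kernel-verified Lean document; each statement's English description precedes it below -/
import Mathlib

section
/- Let μ be the Gibbs distribution of a totally-connected q-state spin system, let γ ≥ 1, let d be any metric on configurations that is γ-equivalent to the Hamming metric, and let κ ∈ (0,1). If μ is κ-contractive with respect to a select-update dynamics with maximum block size M and maximum vertex-selection probability D and the metric d, then μ is spectrally independent with constant η = 2γ²·D·M/(1−κ). -/
open scoped BigOperators
open Classical
noncomputable section

/-- Spin configurations on `n` vertices with `q` spin values. -/
abbrev Cfg (n q : ℕ) := Fin n → Fin q

/-! ### Generic finite probability notions -/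

section Generic
variable {Ω : Type*} [Fintype Ω]

/-- Expectation of `f` under the (finitely supported) distribution `π`. -/
def expec (π f : Ω → ℝ) : ℝ := ∑ s, π s * f s

/-- Entropy functional `Ent_π(f) = π[f log f] - π[f] log π[f]`. -/
def entOf (π f : Ω → ℝ) : ℝ :=
  expec π (fun s => f s * Real.log (f s)) - expec π f * Real.log (expec π f)

/-- `π` is a probability distribution. -/
def IsProb (π : Ω → ℝ) : Prop := (∀ s, 0 ≤ π s) ∧ ∑ s, π s = 1

/-- `P` is a stochastic (Markov transition) matrix. -/
def IsStochastic (P : Ω → Ω → ℝ) : Prop :=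
  (∀ s s', 0 ≤ P s s') ∧ ∀ s, ∑ s', P s s' = 1

/-- `π` is a stationary distribution for `P`. -/
def IsStationaryMat (P : Ω → Ω → ℝ) (π : Ω → ℝ) : Prop :=
  ∀ s', ∑ s, π s * P s s' = π s'

/-- `t`-step transition probabilities. -/
def matPow (P : Ω → Ω → ℝ) : ℕ → Ω → Ω → ℝ
  | 0 => fun s s' => if s = s' then 1 else 0
  | t + 1 => fun s s' => ∑ s'', matPow P t s s'' * P s'' s'

/-- Total variation distance of two distributions. -/
def tvDist (π ρ : Ω → ℝ) : ℝ := (∑ s, |π s - ρ s|) / 2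

/-- Mixing time `max_{X₀} min { t : ‖P^t(X₀,·) − π‖_TV ≤ 1/4 }`. -/
def mixingTime (P : Ω → Ω → ℝ) (π : Ω → ℝ) : ℕ :=
  Finset.univ.sup fun s0 => sInf {t : ℕ | tvDist (matPow P t s0) π ≤ 1/4}

/-- Dirichlet form `D_P(f,g) = ⟨f, (I-P) g⟩_π`. -/
def dirichletForm (P : Ω → Ω → ℝ) (π f g : Ω → ℝ) : ℝ :=
  ∑ s, π s * (f s * (g s - ∑ s', P s s' * g s'))

/-- The modified log-Sobolev inequality with constant `ρ`. -/
def MLSI (P : Ω → Ω → ℝ) (π : Ω → ℝ) (ρ : ℝ) : Prop :=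
  ∀ f : Ω → ℝ, (∀ s, 0 < f s) →
    ρ * entOf π f ≤ dirichletForm P π f (fun s => Real.log (f s))

/-- The standard log-Sobolev inequality with constant `c`. -/
def LSI (P : Ω → Ω → ℝ) (π : Ω → ℝ) (c : ℝ) : Prop :=
  ∀ f : Ω → ℝ, (∀ s, 0 ≤ f s) →
    c * entOf π f ≤ dirichletForm P π (fun s => Real.sqrt (f s)) (fun s => Real.sqrt (f s))

/-- `π` is a coupling of `μ` and `ν`. -/
def IsCoupling (π : Ω × Ω → ℝ) (μ ν : Ω → ℝ) : Prop :=
  (∀ p, 0 ≤ π p) ∧ (∀ s, ∑ s', π (s, s') = μ s) ∧ (∀ s', ∑ s, π (s, s') = ν s')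

/-- 1-Wasserstein distance of `μ` and `ν` with respect to `d`. -/
def W1 (d : Ω → Ω → ℝ) (μ ν : Ω → ℝ) : ℝ :=
  sInf {r | ∃ π : Ω × Ω → ℝ, IsCoupling π μ ν ∧ r = ∑ p, π p * d p.1 p.2}

/-- Optimal Lipschitz constant of `f` with respect to `d`. -/
def lipConst (d : Ω → Ω → ℝ) (f : Ω → ℝ) : ℝ :=
  sInf {L | 0 ≤ L ∧ ∀ a b, |f a - f b| ≤ L * d a b}

end Generic

/-- `d` is a metric (given as a real-valued distance function). -/
structure IsMetricFn {Ω : Type*} (d : Ω → Ω → ℝ) : Prop where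
  refl : ∀ a, d a a = 0
  pos : ∀ a b, a ≠ b → 0 < d a b
  symm : ∀ a b, d a b = d b a
  triangle : ∀ a b c, d a c ≤ d a b + d b c

/-! ### Spin systems -/

/-- Hamming distance between two configurations. -/
def hamming {n q : ℕ} (σ τ : Cfg n q) : ℕ :=
  (Finset.univ.filter fun x => σ x ≠ τ x).card

/-- The graph `G` has maximum degree at most `Δ`. -/
def maxDegreeLE {n : ℕ} (G : SimpleGraph (Fin n)) (Δ : ℕ) : Prop :=
  ∀ v : Fin n, (Finset.univ.filter fun u => G.Adj v u).card ≤ Δ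

/-- A `q`-state spin system on the `n`-vertex graph `G`, given by nonnegative symmetric
pairwise interactions `A` on the edges and nonnegative external fields `B`. -/
structure SpinSystem (n q : ℕ) where
  G : SimpleGraph (Fin n)
  A : Fin n → Fin n → Fin q → Fin q → ℝ
  B : Fin n → Fin q → ℝ
  A_nonneg : ∀ x y a b, 0 ≤ A x y a b
  A_symm : ∀ x y a b, A x y a b = A y x b a
  B_nonneg : ∀ x a, 0 ≤ B x a

namespace SpinSystem

variable {n q : ℕ}

/-- The weight of a configuration. -/
def wt (S : SpinSystem n q) (σ : Cfg n q) : ℝ :=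
  (∏ x : Fin n, ∏ y : Fin n,
      if x < y ∧ S.G.Adj x y then S.A x y (σ x) (σ y) else 1) *
    ∏ x : Fin n, S.B x (σ x)

/-- The weight of a configuration compatible with the pinning `τ` on `U`. -/
def condWt (S : SpinSystem n q) (U : Finset (Fin n)) (τ σ : Cfg n q) : ℝ :=
  if ∀ x ∈ U, σ x = τ x then S.wt σ else 0

/-- Conditional partition function given the pinning `τ` on `U`. -/
def condZ (S : SpinSystem n q) (U : Finset (Fin n)) (τ : Cfg n q) : ℝ :=
  ∑ σ : Cfg n q, S.condWt U τ σ

/-- The Gibbs distribution conditioned on the pinning `τ` on `U`. -/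
def condMu (S : SpinSystem n q) (U : Finset (Fin n)) (τ : Cfg n q) (σ : Cfg n q) : ℝ :=
  S.condWt U τ σ / S.condZ U τ

/-- The (unconditioned) Gibbs distribution. -/
def gibbs (S : SpinSystem n q) : Cfg n q → ℝ := fun σ => S.wt σ / ∑ σ' : Cfg n q, S.wt σ'

/-- `τ` restricted to `U` is a feasible pinning. -/
def IsPinning (S : SpinSystem n q) (U : Finset (Fin n)) (τ : Cfg n q) : Prop :=
  ∃ σ : Cfg n q, 0 < S.wt σ ∧ ∀ x ∈ U, σ x = τ x

/-- The marginal probability that the spin at `x` equals `a`, under the pinning `τ` on `U`. -/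
def margin (S : SpinSystem n q) (U : Finset (Fin n)) (τ : Cfg n q) (x : Fin n) (a : Fin q) : ℝ :=
  ∑ σ : Cfg n q, if σ x = a then S.condMu U τ σ else 0

/-- `(x,a)` is a feasible (unpinned) vertex-spin pair under the pinning `τ` on `U`. -/
def allowed (S : SpinSystem n q) (U : Finset (Fin n)) (τ : Cfg n q) (x : Fin n) (a : Fin q) :
    Prop :=
  x ∉ U ∧ 0 < S.margin U τ x a

/-- The ALO influence matrix `J^τ` of the pinned measure `μ^τ` (extended by `0` outside the
set of feasible vertex-spin pairs). -/
def Jmat (S : SpinSystem n q) (U : Finset (Fin n)) (τ : Cfg n q)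
    (p p' : Fin n × Fin q) : ℝ :=
  if p.1 = p'.1 then 0
  else if S.allowed U τ p.1 p.2 ∧ S.allowed U τ p'.1 p'.2 then
    S.margin (insert p.1 U) (Function.update τ p.1 p.2) p'.1 p'.2 - S.margin U τ p'.1 p'.2
  else 0

/-- Spectral independence: every (real) eigenvalue of every pinned influence matrix `J^τ`
is at most `η`. -/
def SpectrallyIndependent (S : SpinSystem n q) (η : ℝ) : Prop :=
  ∀ U τ, S.IsPinning U τ → ∀ (t : ℝ) (φ : Fin n × Fin q → ℝ),
    (∀ p, ¬ S.allowed U τ p.1 p.2 → φ p = 0) → φ ≠ 0 →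
    (∀ p, (∑ p' : Fin n × Fin q, S.Jmat U τ p p' * φ p') = t * φ p) →
    t ≤ η

/-- `b`-marginal boundedness: every positive conditional marginal is at least `b`. -/
def MarginallyBounded (S : SpinSystem n q) (b : ℝ) : Prop :=
  ∀ U τ, S.IsPinning U τ → ∀ x, x ∉ U → ∀ a : Fin q,
    0 < S.margin U τ x a → b ≤ S.margin U τ x a

/-- Total connectivity: for every pinning, any two configurations in the support of the
pinned measure are connected by single-site moves within the support. -/
def TotallyConnected (S : SpinSystem n q) : Prop :=
  ∀ U τ, S.IsPinning U τ → ∀ σ σ' : Cfg n q,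
    0 < S.condWt U τ σ → 0 < S.condWt U τ σ' →
    Relation.ReflTransGen
      (fun a b => 0 < S.condWt U τ a ∧ 0 < S.condWt U τ b ∧ hamming a b = 1) σ σ'

/-- Conditional expectation `μ^U f` of `f` given the spins on `U`. -/
def condExp (S : SpinSystem n q) (U : Finset (Fin n)) (f : Cfg n q → ℝ) : Cfg n q → ℝ :=
  fun σ => expec (S.condMu U σ) f

/-- Expected conditional entropy `μ[Ent_B f]`. -/
def muEnt (S : SpinSystem n q) (B : Finset (Fin n)) (f : Cfg n q → ℝ) : ℝ :=
  ∑ σ : Cfg n q, S.gibbs σ * entOf (S.condMu Bᶜ σ) f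

/-- The `α`-weighted heat-bath block dynamics. -/
def blockDyn (S : SpinSystem n q) (α : Finset (Fin n) → ℝ) (σ σ' : Cfg n q) : ℝ :=
  ∑ B : Finset (Fin n), α B * S.condMu Bᶜ σ σ'

/-- The Glauber dynamics for the measure pinned on `U` (a uniformly random vertex is chosen;
pinned vertices leave the configuration unchanged, unpinned vertices are resampled from the
conditional distribution given all the other spins). -/
def glauberPin (S : SpinSystem n q) (U : Finset (Fin n)) (σ σ' : Cfg n q) : ℝ :=
  (n : ℝ)⁻¹ * ∑ x : Fin n,
    if x ∈ U then (if σ' = σ then 1 else 0)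
    else S.condMu (({x} : Finset (Fin n))ᶜ) σ σ'

/-- The (unpinned) Glauber dynamics. -/
def glauber (S : SpinSystem n q) : Cfg n q → Cfg n q → ℝ := S.glauberPin ∅

/-- The Dobrushin dependency matrix. -/
def dobrushin (S : SpinSystem n q) (x y : Fin n) : ℝ :=
  if x = y then 0 else
    sSup {r | ∃ σ τ : Cfg n q,
      S.IsPinning (Finset.univ.erase y) σ ∧ S.IsPinning (Finset.univ.erase y) τ ∧
      (∀ z : Fin n, z ≠ x → z ≠ y → σ z = τ z) ∧
      r = tvDist (fun a : Fin q => S.margin (Finset.univ.erase y) σ y a)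
                 (fun a : Fin q => S.margin (Finset.univ.erase y) τ y a)}

end SpinSystem

/-- `δ(α) = min_x ∑_{B ∋ x} α_B`. -/
def deltaOf (n : ℕ) (α : Finset (Fin n) → ℝ) : ℝ :=
  ⨅ x : Fin n, ∑ B ∈ Finset.univ.filter (fun B : Finset (Fin n) => x ∈ B), α B

/-- General block factorization of entropy with constant `C`. -/
def GBF {n q : ℕ} (S : SpinSystem n q) (C : ℝ) : Prop :=
  ∀ α : Finset (Fin n) → ℝ, (∀ B, 0 ≤ α B) → (∑ B : Finset (Fin n), α B = 1) →
    ∀ f : Cfg n q → ℝ, (∀ σ, 0 ≤ f σ) →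
      deltaOf n α * entOf S.gibbs f ≤ C * ∑ B : Finset (Fin n), α B * S.muEnt B f

/-- `ℓ`-uniform block factorization of entropy with constant `C`. -/
def UBF {n q : ℕ} (S : SpinSystem n q) (ℓ : ℕ) (C : ℝ) : Prop :=
  ∀ f : Cfg n q → ℝ, (∀ σ, 0 ≤ f σ) →
    ((ℓ : ℝ) / n) * entOf S.gibbs f ≤
      C * ((Nat.choose n ℓ : ℝ)⁻¹ *
        ∑ Λ ∈ Finset.powersetCard ℓ (Finset.univ : Finset (Fin n)), S.muEnt Λ f)

/-- `P` is a partition of the vertex set into independent sets of `G`. -/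
def IsIndepPartition {n k : ℕ} (G : SimpleGraph (Fin n)) (P : Fin k → Finset (Fin n)) : Prop :=
  (∀ x : Fin n, ∃! i, x ∈ P i) ∧ ∀ i, ∀ x ∈ P i, ∀ y ∈ P i, ¬ G.Adj x y

/-- `k`-partite factorization of entropy with constant `C` relative to the partition `P`. -/
def KPF {n q k : ℕ} (S : SpinSystem n q) (P : Fin k → Finset (Fin n)) (C : ℝ) : Prop :=
  ∀ f : Cfg n q → ℝ, (∀ σ, 0 ≤ f σ) →
    entOf S.gibbs f ≤ C * ∑ i : Fin k, S.muEnt (P i) f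

/-! ### Metrics on configurations and contraction -/

/-- Hamming metric, real-valued. -/
def dHam {n q : ℕ} (σ τ : Cfg n q) : ℝ := (hamming σ τ : ℝ)

/-- `w`-weighted Hamming metric. -/
def dW {n q : ℕ} (w : Fin n → ℝ) (σ τ : Cfg n q) : ℝ :=
  ∑ x : Fin n, if σ x ≠ τ x then w x else 0

/-- `d` is `γ`-equivalent to the Hamming metric. -/
def GammaEquiv {n q : ℕ} (γ : ℝ) (d : Cfg n q → Cfg n q → ℝ) : Prop :=
  ∀ σ τ : Cfg n q, (1 / γ) * dHam σ τ ≤ d σ τ ∧ d σ τ ≤ γ * dHam σ τ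

/-- `μ` is `κ`-contractive with respect to the family of chains `P` (one for each pinning)
and the metric `d`: from any two states in the support of the pinned measure there is a
one-step coupling contracting `d` by a factor `κ` in expectation. -/
def ContractiveFam {n q : ℕ} (S : SpinSystem n q)
    (P : Finset (Fin n) → Cfg n q → Cfg n q → Cfg n q → ℝ)
    (d : Cfg n q → Cfg n q → ℝ) (κ : ℝ) : Prop :=
  ∀ U τ, S.IsPinning U τ → ∀ X₀ Y₀ : Cfg n q,
    0 < S.condWt U τ X₀ → 0 < S.condWt U τ Y₀ →
    ∃ π : Cfg n q × Cfg n q → ℝ,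
      IsCoupling π (P U τ X₀) (P U τ Y₀) ∧
      (∑ p : Cfg n q × Cfg n q, π p * d p.1 p.2) ≤ κ * d X₀ Y₀

/-- The family of chains `P` is `Φ`-local: extending a pinning by a single feasible
vertex-spin pair changes one step of the chain by at most `Φ` in Wasserstein distance
with respect to the Hamming metric. -/
def PhiLocal {n q : ℕ} (S : SpinSystem n q)
    (P : Finset (Fin n) → Cfg n q → Cfg n q → Cfg n q → ℝ) (Φ : ℝ) : Prop :=
  ∀ U τ, S.IsPinning U τ → ∀ x, x ∉ U → ∀ a : Fin q,
    0 < S.margin U τ x a →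
    ∀ σ : Cfg n q, 0 < S.condWt (insert x U) (Function.update τ x a) σ →
      W1 dHam (P U τ σ) (P (insert x U) (Function.update τ x a) σ) ≤ Φ

/-- A select-update dynamics for the spin system `S`: a block is selected from a
distribution that may depend on the current configuration (but not on the pinning),
and the configuration on the block is resampled from a distribution that may depend on
the current configuration and on the restriction of the pinning to the block; for each
pinning the resulting chain has the pinned Gibbs measure as stationary distribution. -/
structure SelectUpdate {n q : ℕ} (S : SpinSystem n q) where
  blocks : Finset (Finset (Fin n))
  sel : Cfg n q → Finset (Fin n) → ℝ
  sel_nonneg : ∀ σ B, 0 ≤ sel σ B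
  sel_sum : ∀ σ, ∑ B ∈ blocks, sel σ B = 1
  upd : Finset (Fin n) → Cfg n q → Cfg n q → Finset (Fin n) → Cfg n q → ℝ
  upd_nonneg : ∀ U τ σ B σ', 0 ≤ upd U τ σ B σ'
  upd_sum : ∀ U τ σ B, ∑ σ' : Cfg n q, upd U τ σ B σ' = 1
  upd_off : ∀ U τ σ B σ', upd U τ σ B σ' ≠ 0 → ∀ x ∉ B, σ' x = σ x
  upd_local : ∀ U U' τ τ' σ B, U ∩ B = U' ∩ B → (∀ x ∈ U ∩ B, τ x = τ' x) →
    upd U τ σ B = upd U' τ' σ B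
  stat : ∀ U τ, S.IsPinning U τ →
    IsStationaryMat (fun σ σ' => ∑ B ∈ blocks, sel σ B * upd U τ σ B σ') (S.condMu U τ)

/-- The transition matrix of the select-update dynamics under the pinning `τ` on `U`. -/
def SelectUpdate.chain {n q : ℕ} {S : SpinSystem n q} (SU : SelectUpdate S)
    (U : Finset (Fin n)) (τ : Cfg n q) (σ σ' : Cfg n q) : ℝ :=
  ∑ B ∈ SU.blocks, SU.sel σ B * SU.upd U τ σ B σ'

/-- Spectral radius of a real square matrix (largest modulus of a complex eigenvalue). -/
def specRad {n : ℕ} (M : Matrix (Fin n) (Fin n) ℝ) : ℝ :=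
  sSup {r : ℝ | ∃ z : ℂ, z ∈ spectrum ℂ (M.map ((↑) : ℝ → ℂ)) ∧ r = ‖z‖}

/-! ### Models: Potts/Ising, colorings, Swendsen-Wang, Edwards-Sokal -/

/-- The `q`-state ferromagnetic Potts model at inverse temperature `β`. -/
def pottsSystem (n q : ℕ) (β : ℝ) (G : SimpleGraph (Fin n)) : SpinSystem n q where
  G := G
  A := fun _ _ a b => Real.exp (if a = b then β else 0)
  B := fun _ _ => 1
  A_nonneg := fun _ _ _ _ => (Real.exp_pos _).le
  A_symm := by
    intro x y a b
    by_cases h : a = b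
    · subst h; rfl
    · have h' : ¬ b = a := fun hba => h hba.symm
      simp [h, h']
  B_nonneg := fun _ _ => zero_le_one

/-- The ferromagnetic Ising model at inverse temperature `β`. -/
def isingSystem (n : ℕ) (β : ℝ) (G : SimpleGraph (Fin n)) : SpinSystem n 2 :=
  pottsSystem n 2 β G

/-- The proper `q`-colorings model (so its Gibbs distribution is the uniform distribution
over proper `q`-colorings). -/
def coloringSystem (n q : ℕ) (G : SimpleGraph (Fin n)) : SpinSystem n q where
  G := G
  A := fun _ _ a b => if a = b then 0 else 1
  B := fun _ _ => 1
  A_nonneg := by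
    intro x y a b; split <;> norm_num
  A_symm := by
    intro x y a b
    by_cases h : a = b
    · subst h; rfl
    · have h' : ¬ b = a := fun hba => h hba.symm
      simp [h, h']
  B_nonneg := fun _ _ => zero_le_one

/-- The set of edges of `G` that are monochromatic in `σ`. -/
def monoEdges {n q : ℕ} (G : SimpleGraph (Fin n)) (σ : Cfg n q) : Finset (Sym2 (Fin n)) :=
  Finset.univ.filter fun e => e ∈ G.edgeSet ∧ ∀ x ∈ e, ∀ y ∈ e, σ x = σ y

/-- The edge set of `G` as a finset. -/
def edgesOf {n : ℕ} (G : SimpleGraph (Fin n)) : Finset (Sym2 (Fin n)) :=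
  Finset.univ.filter fun e => e ∈ G.edgeSet

/-- The Swendsen-Wang dynamics: each monochromatic edge is retained independently with
probability `p`, and then every connected component of the retained graph receives an
independent uniformly random spin. -/
def swStep {n : ℕ} (G : SimpleGraph (Fin n)) (q : ℕ) (p : ℝ) (σ σ' : Cfg n q) : ℝ :=
  ∑ A ∈ (monoEdges G σ).powerset,
    p ^ A.card * (1 - p) ^ ((monoEdges G σ).card - A.card) *
      (if ∀ x y : Fin n,
            (SimpleGraph.fromEdgeSet (A : Set (Sym2 (Fin n)))).Reachable x y → σ' x = σ' y
       then ((q : ℝ))⁻¹ ^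
          (Nat.card (SimpleGraph.fromEdgeSet (A : Set (Sym2 (Fin n)))).ConnectedComponent)
       else 0)

/-- Edwards-Sokal weight of a joint spin-edge configuration, with `p = 1 - e^{-β}`. -/
def esWt {n : ℕ} (G : SimpleGraph (Fin n)) (q : ℕ) (β : ℝ)
    (p0 : Cfg n q × Finset (Sym2 (Fin n))) : ℝ :=
  if p0.2 ⊆ monoEdges G p0.1 then
    (1 - Real.exp (-β)) ^ p0.2.card * (Real.exp (-β)) ^ ((edgesOf G).card - p0.2.card)
  else 0

/-- Edwards-Sokal (joint) measure. -/
def esMu {n : ℕ} (G : SimpleGraph (Fin n)) (q : ℕ) (β : ℝ)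
    (p0 : Cfg n q × Finset (Sym2 (Fin n))) : ℝ :=
  esWt G q β p0 / ∑ p1 : Cfg n q × Finset (Sym2 (Fin n)), esWt G q β p1

/-- Edwards-Sokal measure conditioned on the spin configuration being `σ0`. -/
def esCondSpin {n : ℕ} (G : SimpleGraph (Fin n)) (q : ℕ) (β : ℝ) (σ0 : Cfg n q)
    (p0 : Cfg n q × Finset (Sym2 (Fin n))) : ℝ :=
  if p0.1 = σ0 then
    esWt G q β p0 / ∑ A : Finset (Sym2 (Fin n)), esWt G q β (σ0, A)
  else 0

/-- Edwards-Sokal measure conditioned on the edge configuration being `A0`. -/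
def esCondEdge {n : ℕ} (G : SimpleGraph (Fin n)) (q : ℕ) (β : ℝ) (A0 : Finset (Sym2 (Fin n)))
    (p0 : Cfg n q × Finset (Sym2 (Fin n))) : ℝ :=
  if p0.2 = A0 then
    esWt G q β p0 / ∑ σ : Cfg n q, esWt G q β (σ, A0)
  else 0

/-- `ν[Ent_ν(f | σ)]`: the expected conditional entropy of `f` given the spins. -/
def esSpinEnt {n : ℕ} (G : SimpleGraph (Fin n)) (q : ℕ) (β : ℝ)
    (f : Cfg n q × Finset (Sym2 (Fin n)) → ℝ) : ℝ :=
  ∑ p0 : Cfg n q × Finset (Sym2 (Fin n)), esMu G q β p0 * entOf (esCondSpin G q β p0.1) f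

/-- `ν[Ent_ν(f | A)]`: the expected conditional entropy of `f` given the edges. -/
def esEdgeEnt {n : ℕ} (G : SimpleGraph (Fin n)) (q : ℕ) (β : ℝ)
    (f : Cfg n q × Finset (Sym2 (Fin n)) → ℝ) : ℝ :=
  ∑ p0 : Cfg n q × Finset (Sym2 (Fin n)), esMu G q β p0 * entOf (esCondEdge G q β p0.2) f


/-! ### Auxiliary lemmas for Statement 6 -/

namespace SIhelp

variable {Ω : Type*} [Fintype Ω]

lemma cost_nonneg {π : Ω × Ω → ℝ} {d : Ω → Ω → ℝ} (hπ : ∀ p, 0 ≤ π p)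
    (hd : ∀ a b, 0 ≤ d a b) : 0 ≤ ∑ p : Ω × Ω, π p * d p.1 p.2 :=
  Finset.sum_nonneg fun p _ => mul_nonneg (hπ p) (hd _ _)

lemma bddBelow_couplings {d : Ω → Ω → ℝ} (hd : ∀ a b, 0 ≤ d a b) (μ ν : Ω → ℝ) :
    BddBelow {r | ∃ π : Ω × Ω → ℝ, IsCoupling π μ ν ∧ r = ∑ p, π p * d p.1 p.2} := by
  refine ⟨0, fun r hr => ?_⟩
  obtain ⟨π, hπ, rfl⟩ := hr
  exact cost_nonneg hπ.1 hd

lemma W1_le {d : Ω → Ω → ℝ} {μ ν : Ω → ℝ} {π : Ω × Ω → ℝ}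
    (hd : ∀ a b, 0 ≤ d a b) (h : IsCoupling π μ ν) :
    W1 d μ ν ≤ ∑ p : Ω × Ω, π p * d p.1 p.2 :=
  csInf_le (bddBelow_couplings hd μ ν) ⟨π, h, rfl⟩

lemma exists_coupling_lt {d : Ω → Ω → ℝ} {μ ν : Ω → ℝ}
    (hne : ∃ π : Ω × Ω → ℝ, IsCoupling π μ ν) {ε : ℝ} (hε : 0 < ε) :
    ∃ π : Ω × Ω → ℝ, IsCoupling π μ ν ∧ (∑ p : Ω × Ω, π p * d p.1 p.2) < W1 d μ ν + ε := by
  obtain ⟨π0, h0⟩ := hne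
  have hnonempty :
      {r | ∃ π : Ω × Ω → ℝ, IsCoupling π μ ν ∧ r = ∑ p, π p * d p.1 p.2}.Nonempty :=
    ⟨_, π0, h0, rfl⟩
  obtain ⟨r, ⟨π, hπ, rfl⟩, hlt⟩ := Real.lt_sInf_add_pos hnonempty hε
  exact ⟨π, hπ, hlt⟩

lemma prod_coupling {μ ν : Ω → ℝ} (hμ : IsProb μ) (hν : IsProb ν) :
    IsCoupling (fun p : Ω × Ω => μ p.1 * ν p.2) μ ν := by
  refine ⟨fun p => mul_nonneg (hμ.1 _) (hν.1 _), fun s => ?_, fun s' => ?_⟩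
  · simp only [← Finset.mul_sum, hν.2, mul_one]
  · simp only [← Finset.sum_mul, hμ.2, one_mul]

/-- Gluing lemma for couplings. -/
lemma glue_coupling {μ ρ ν : Ω → ℝ} {π1 π2 : Ω × Ω → ℝ} (d : Ω → Ω → ℝ)
    (htri : ∀ a b c, d a c ≤ d a b + d b c)
    (h1 : IsCoupling π1 μ ρ) (h2 : IsCoupling π2 ρ ν) :
    ∃ π : Ω × Ω → ℝ, IsCoupling π μ ν ∧
      (∑ p : Ω × Ω, π p * d p.1 p.2) ≤
        (∑ p : Ω × Ω, π1 p * d p.1 p.2) + ∑ p : Ω × Ω, π2 p * d p.1 p.2 := by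
  have hρ0 : ∀ b, ρ b = 0 → (∀ a, π1 (a, b) = 0) ∧ (∀ c, π2 (b, c) = 0) := by
    intro b hb
    constructor
    · intro a
      have hsum : ∑ a, π1 (a, b) = 0 := (h1.2.2 b).trans hb
      have := (Finset.sum_eq_zero_iff_of_nonneg (fun a _ => h1.1 (a, b))).1 hsum
      exact this a (Finset.mem_univ a)
    · intro c
      have hsum : ∑ c, π2 (b, c) = 0 := (h2.2.1 b).trans hb
      have := (Finset.sum_eq_zero_iff_of_nonneg (fun c _ => h2.1 (b, c))).1 hsum
      exact this c (Finset.mem_univ c)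
  have hρnn : ∀ b, 0 ≤ ρ b := by
    intro b; rw [← h1.2.2 b]; exact Finset.sum_nonneg fun a _ => h1.1 _
  set π : Ω × Ω → ℝ := fun p => ∑ b, π1 (p.1, b) * π2 (b, p.2) / ρ b with hπdef
  have hπnn : ∀ p, 0 ≤ π p := by
    intro p
    exact Finset.sum_nonneg fun b _ =>
      div_nonneg (mul_nonneg (h1.1 _) (h2.1 _)) (hρnn b)
  have key1 : ∀ a b, π1 (a, b) * ρ b / ρ b = π1 (a, b) := by
    intro a b
    rcases eq_or_ne (ρ b) 0 with h | h
    · rw [(hρ0 b h).1 a]; simp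
    · rw [mul_div_assoc, div_self h, mul_one]
  have key2 : ∀ b c, π2 (b, c) * ρ b / ρ b = π2 (b, c) := by
    intro b c
    rcases eq_or_ne (ρ b) 0 with h | h
    · rw [(hρ0 b h).2 c]; simp
    · rw [mul_div_assoc, div_self h, mul_one]
  refine ⟨π, ⟨hπnn, ?_, ?_⟩, ?_⟩
  · intro a
    calc ∑ c, π (a, c) = ∑ b, ∑ c, π1 (a, b) * π2 (b, c) / ρ b := Finset.sum_comm
      _ = ∑ b, π1 (a, b) * ρ b / ρ b := by
          refine Finset.sum_congr rfl fun b _ => ?_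
          rw [← Finset.sum_div, ← Finset.mul_sum, h2.2.1 b]
      _ = ∑ b, π1 (a, b) := Finset.sum_congr rfl fun b _ => key1 a b
      _ = μ a := h1.2.1 a
  · intro c
    calc ∑ a, π (a, c) = ∑ b, ∑ a, π1 (a, b) * π2 (b, c) / ρ b := Finset.sum_comm
      _ = ∑ b, π2 (b, c) * ρ b / ρ b := by
          refine Finset.sum_congr rfl fun b _ => ?_
          rw [← Finset.sum_div]
          congr 1
          rw [← Finset.sum_mul, h1.2.2 b, mul_comm]
      _ = ∑ b, π2 (b, c) := Finset.sum_congr rfl fun b _ => key2 b c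
      _ = ν c := h2.2.2 c
  · have expand : (∑ p : Ω × Ω, π p * d p.1 p.2)
        = ∑ a, ∑ c, ∑ b, π1 (a, b) * π2 (b, c) / ρ b * d a c := by
      rw [Fintype.sum_prod_type]
      refine Finset.sum_congr rfl fun a _ => Finset.sum_congr rfl fun c _ => ?_
      rw [Finset.sum_mul]
    rw [expand]
    have step : ∀ a c b, π1 (a, b) * π2 (b, c) / ρ b * d a c ≤
        π1 (a, b) * π2 (b, c) / ρ b * d a b + π1 (a, b) * π2 (b, c) / ρ b * d b c := by
      intro a c b
      rw [← mul_add]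
      exact mul_le_mul_of_nonneg_left (htri a b c)
        (div_nonneg (mul_nonneg (h1.1 _) (h2.1 _)) (hρnn b))
    have T1 : (∑ a, ∑ c, ∑ b, π1 (a, b) * π2 (b, c) / ρ b * d a b)
        = ∑ p : Ω × Ω, π1 p * d p.1 p.2 := by
      rw [Fintype.sum_prod_type]
      refine Finset.sum_congr rfl fun a _ => ?_
      rw [Finset.sum_comm]
      refine Finset.sum_congr rfl fun b _ => ?_
      have e : ∀ c, π1 (a, b) * π2 (b, c) / ρ b * d a b
          = (π1 (a, b) * d a b / ρ b) * π2 (b, c) := fun c => by ring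
      rw [Finset.sum_congr rfl fun c _ => e c, ← Finset.mul_sum, h2.2.1 b]
      rcases eq_or_ne (ρ b) 0 with h | h
      · rw [(hρ0 b h).1 a]; simp
      · field_simp
    have T2 : (∑ a, ∑ c, ∑ b, π1 (a, b) * π2 (b, c) / ρ b * d b c)
        = ∑ p : Ω × Ω, π2 p * d p.1 p.2 := by
      have swap1 : (∑ a, ∑ c, ∑ b, π1 (a, b) * π2 (b, c) / ρ b * d b c)
          = ∑ c, ∑ a, ∑ b, π1 (a, b) * π2 (b, c) / ρ b * d b c :=
        Finset.sum_comm
      rw [swap1]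
      have inner : ∀ c, (∑ a, ∑ b, π1 (a, b) * π2 (b, c) / ρ b * d b c)
          = ∑ b, π2 (b, c) * d b c := by
        intro c
        rw [Finset.sum_comm]
        refine Finset.sum_congr rfl fun b _ => ?_
        have e : ∀ a, π1 (a, b) * π2 (b, c) / ρ b * d b c
            = π1 (a, b) * (π2 (b, c) * d b c / ρ b) := fun a => by ring
        rw [Finset.sum_congr rfl fun a _ => e a, ← Finset.sum_mul, h1.2.2 b]
        rcases eq_or_ne (ρ b) 0 with h | h
        · rw [(hρ0 b h).2 c]; simp
        · field_simp
      rw [Finset.sum_congr rfl fun c _ => inner c, Fintype.sum_prod_type]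
      exact Finset.sum_comm
    calc ∑ a, ∑ c, ∑ b, π1 (a, b) * π2 (b, c) / ρ b * d a c
        ≤ ∑ a, ∑ c, ∑ b, (π1 (a, b) * π2 (b, c) / ρ b * d a b
            + π1 (a, b) * π2 (b, c) / ρ b * d b c) := by
          refine Finset.sum_le_sum fun a _ => Finset.sum_le_sum fun c _ =>
            Finset.sum_le_sum fun b _ => step a c b
      _ = (∑ a, ∑ c, ∑ b, π1 (a, b) * π2 (b, c) / ρ b * d a b)
            + ∑ a, ∑ c, ∑ b, π1 (a, b) * π2 (b, c) / ρ b * d b c := by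
          simp [Finset.sum_add_distrib]
      _ = (∑ p : Ω × Ω, π1 p * d p.1 p.2) + ∑ p : Ω × Ω, π2 p * d p.1 p.2 := by
          rw [T1, T2]

end SIhelp

namespace SIspin

open SpinSystem

variable {n q : ℕ} (S : SpinSystem n q)

lemma wt_nonneg (σ : Cfg n q) : 0 ≤ S.wt σ := by
  refine mul_nonneg (Finset.prod_nonneg fun x _ => Finset.prod_nonneg fun y _ => ?_)
    (Finset.prod_nonneg fun x _ => S.B_nonneg x _)
  split
  · exact S.A_nonneg _ _ _ _
  · exact zero_le_one

lemma condWt_nonneg (U : Finset (Fin n)) (τ σ : Cfg n q) : 0 ≤ S.condWt U τ σ := by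
  unfold SpinSystem.condWt
  split
  · exact wt_nonneg S σ
  · exact le_refl 0

lemma condZ_nonneg (U : Finset (Fin n)) (τ : Cfg n q) : 0 ≤ S.condZ U τ :=
  Finset.sum_nonneg fun σ _ => condWt_nonneg S U τ σ

lemma condZ_pos {U : Finset (Fin n)} {τ : Cfg n q} (h : S.IsPinning U τ) :
    0 < S.condZ U τ := by
  obtain ⟨σ0, hw, hσ0⟩ := h
  have hterm : 0 < S.condWt U τ σ0 := by
    unfold SpinSystem.condWt
    rw [if_pos hσ0]
    exact hw
  exact lt_of_lt_of_le hterm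
    (Finset.single_le_sum (fun σ _ => condWt_nonneg S U τ σ) (Finset.mem_univ σ0))

lemma condMu_nonneg (U : Finset (Fin n)) (τ σ : Cfg n q) : 0 ≤ S.condMu U τ σ :=
  div_nonneg (condWt_nonneg S U τ σ) (condZ_nonneg S U τ)

lemma condMu_isProb {U : Finset (Fin n)} {τ : Cfg n q} (h : S.IsPinning U τ) :
    IsProb (S.condMu U τ) := by
  refine ⟨condMu_nonneg S U τ, ?_⟩
  unfold SpinSystem.condMu
  rw [← Finset.sum_div]
  exact div_self (ne_of_gt (condZ_pos S h))

lemma condWt_pos_of_condMu_pos {U : Finset (Fin n)} {τ σ : Cfg n q}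
    (h : 0 < S.condMu U τ σ) : 0 < S.condWt U τ σ := by
  by_contra hc
  have hz : S.condWt U τ σ = 0 := le_antisymm (not_lt.mp hc) (condWt_nonneg S U τ σ)
  rw [SpinSystem.condMu, hz, zero_div] at h
  exact lt_irrefl 0 h

lemma condMu_pos_of_condWt_pos {U : Finset (Fin n)} {τ σ : Cfg n q}
    (hpin : S.IsPinning U τ) (h : 0 < S.condWt U τ σ) : 0 < S.condMu U τ σ :=
  div_pos h (condZ_pos S hpin)

lemma margin_nonneg (U : Finset (Fin n)) (τ : Cfg n q) (x : Fin n) (a : Fin q) :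
    0 ≤ S.margin U τ x a := by
  refine Finset.sum_nonneg fun σ _ => ?_
  split
  · exact condMu_nonneg S U τ σ
  · exact le_refl 0

lemma exists_support_of_margin_pos {U : Finset (Fin n)} {τ : Cfg n q} {x : Fin n} {a : Fin q}
    (h : 0 < S.margin U τ x a) :
    ∃ σ : Cfg n q, 0 < S.condWt U τ σ ∧ σ x = a ∧ ∀ y ∈ U, σ y = τ y := by
  have : ∃ σ ∈ (Finset.univ : Finset (Cfg n q)),
      0 < (if σ x = a then S.condMu U τ σ else 0) := by
    by_contra hc
    push_neg at hc
    have : S.margin U τ x a ≤ 0 := by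
      refine Finset.sum_nonpos fun σ hσ => hc σ hσ
    exact absurd h (not_lt.mpr this)
  obtain ⟨σ, -, hσ⟩ := this
  by_cases hxa : σ x = a
  · rw [if_pos hxa] at hσ
    have hw := condWt_pos_of_condMu_pos S hσ
    have hU : ∀ y ∈ U, σ y = τ y := by
      by_contra hUc
      have : S.condWt U τ σ = 0 := by
        unfold SpinSystem.condWt
        rw [if_neg hUc]
      rw [this] at hw; exact lt_irrefl 0 hw
    exact ⟨σ, hw, hxa, hU⟩
  · rw [if_neg hxa] at hσ; exact absurd hσ (lt_irrefl 0)

lemma wt_pos_of_condWt_pos {U : Finset (Fin n)} {τ σ : Cfg n q}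
    (h : 0 < S.condWt U τ σ) : 0 < S.wt σ ∧ ∀ y ∈ U, σ y = τ y := by
  by_cases hc : ∀ y ∈ U, σ y = τ y
  · refine ⟨?_, hc⟩
    unfold SpinSystem.condWt at h
    rwa [if_pos hc] at h
  · unfold SpinSystem.condWt at h
    rw [if_neg hc] at h
    exact absurd h (lt_irrefl 0)

lemma isPinning_insert {U : Finset (Fin n)} {τ : Cfg n q} {x : Fin n} {a : Fin q}
    (hx : x ∉ U) (h : 0 < S.margin U τ x a) :
    S.IsPinning (insert x U) (Function.update τ x a) := by
  obtain ⟨σ, hw, hxa, hU⟩ := exists_support_of_margin_pos S h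
  obtain ⟨hwt, -⟩ := wt_pos_of_condWt_pos S hw
  refine ⟨σ, hwt, fun y hy => ?_⟩
  rcases Finset.mem_insert.mp hy with rfl | hyU
  · rw [hxa, Function.update_self]
  · have hyx : y ≠ x := fun he => hx (he ▸ hyU)
    rw [Function.update_of_ne hyx, hU y hyU]

lemma condWt_insert_pos {U : Finset (Fin n)} {τ : Cfg n q} {x : Fin n} {a : Fin q}
    (hx : x ∉ U) {σ : Cfg n q}
    (h : 0 < S.condWt (insert x U) (Function.update τ x a) σ) : 0 < S.condWt U τ σ := by
  obtain ⟨hwt, hins⟩ := wt_pos_of_condWt_pos S h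
  have : ∀ y ∈ U, σ y = τ y := by
    intro y hy
    have hyx : y ≠ x := fun he => hx (he ▸ hy)
    have := hins y (Finset.mem_insert_of_mem hy)
    rwa [Function.update_of_ne hyx] at this
  unfold SpinSystem.condWt
  rw [if_pos this]
  exact hwt

lemma dHam_nonneg (σ τ : Cfg n q) : 0 ≤ dHam σ τ := Nat.cast_nonneg _

lemma dHam_self (σ : Cfg n q) : dHam σ σ = 0 := by
  simp [dHam, hamming]

lemma dHam_le_of_agree {B : Finset (Fin n)} {s t : Cfg n q}
    (h : ∀ y, y ∉ B → s y = t y) : dHam s t ≤ (B.card : ℝ) := by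
  have hsub : (Finset.univ.filter fun y => s y ≠ t y) ⊆ B := by
    intro y hy
    rw [Finset.mem_filter] at hy
    by_contra hyB
    exact hy.2 (h y hyB)
  exact_mod_cast Nat.cast_le.mpr (Finset.card_le_card hsub)

lemma sum_abs_indicator (s t : Cfg n q) :
    (∑ p' : Fin n × Fin q,
        |(if t p'.1 = p'.2 then (1 : ℝ) else 0) - (if s p'.1 = p'.2 then (1 : ℝ) else 0)|)
      = 2 * dHam s t := by
  rw [Fintype.sum_prod_type]
  have inner : ∀ y : Fin n,
      (∑ b : Fin q, |(if t y = b then (1 : ℝ) else 0) - (if s y = b then (1 : ℝ) else 0)|)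
        = if s y = t y then 0 else 2 := by
    intro y
    by_cases h : s y = t y
    · rw [if_pos h]
      refine Finset.sum_eq_zero fun b _ => ?_
      rw [h]
      simp
    · rw [if_neg h]
      have e : ∀ b : Fin q,
          |(if t y = b then (1 : ℝ) else 0) - (if s y = b then (1 : ℝ) else 0)|
            = (if t y = b then (1 : ℝ) else 0) + (if s y = b then (1 : ℝ) else 0) := by
        intro b
        by_cases h1 : t y = b <;> by_cases h2 : s y = b
        · exact absurd (h2.trans h1.symm) h
        · simp [h1, h2]
        · simp [h1, h2]
        · simp [h1, h2]
      rw [Finset.sum_congr rfl fun b _ => e b, Finset.sum_add_distrib]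
      norm_num
  rw [Finset.sum_congr rfl fun y _ => inner y]
  have : (∑ y : Fin n, if s y = t y then (0 : ℝ) else 2)
      = ∑ y ∈ Finset.univ.filter (fun y => ¬ s y = t y), 2 := by
    rw [Finset.sum_filter]
    refine Finset.sum_congr rfl fun y _ => ?_
    by_cases h : s y = t y <;> simp [h]
  rw [this, Finset.sum_const, dHam, hamming]
  push_cast
  ring

end SIspin


namespace SIsteps

open SpinSystem SIhelp SIspin

variable {n q : ℕ}

/-- Step A: one parallel step of the same chain from a coupling, contracting `d`. -/
lemma stepA (S : SpinSystem n q) (SU : SelectUpdate S) {U : Finset (Fin n)} {τ : Cfg n q}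
    (hpin : S.IsPinning U τ) (d : Cfg n q → Cfg n q → ℝ) (κ : ℝ)
    (hcon : ContractiveFam S SU.chain d κ)
    (μ' ν' : Cfg n q → ℝ) (π : Cfg n q × Cfg n q → ℝ) (hπ : IsCoupling π μ' ν')
    (hsupp : ∀ XY : Cfg n q × Cfg n q, 0 < π XY →
      0 < S.condWt U τ XY.1 ∧ 0 < S.condWt U τ XY.2) :
    ∃ π' : Cfg n q × Cfg n q → ℝ,
      IsCoupling π' (fun s => ∑ X, μ' X * SU.chain U τ X s)
        (fun t => ∑ Y, ν' Y * SU.chain U τ Y t) ∧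
      (∑ p : Cfg n q × Cfg n q, π' p * d p.1 p.2)
        ≤ κ * ∑ p : Cfg n q × Cfg n q, π p * d p.1 p.2 := by
  have hch : ∀ XY : Cfg n q × Cfg n q, ∃ c : Cfg n q × Cfg n q → ℝ,
      (0 < π XY → IsCoupling c (SU.chain U τ XY.1) (SU.chain U τ XY.2) ∧
        (∑ p : Cfg n q × Cfg n q, c p * d p.1 p.2) ≤ κ * d XY.1 XY.2) ∧
      (¬ 0 < π XY → c = fun _ => 0) := by
    intro XY
    by_cases h : 0 < π XY
    · obtain ⟨c, hc⟩ := hcon U τ hpin XY.1 XY.2 (hsupp XY h).1 (hsupp XY h).2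
      exact ⟨c, fun _ => hc, fun h' => absurd h h'⟩
    · exact ⟨fun _ => 0, fun h' => absurd h' h, fun _ => rfl⟩
  choose c hc hc0 using hch
  have hπz : ∀ XY : Cfg n q × Cfg n q, ¬ 0 < π XY → π XY = 0 := fun XY h =>
    le_antisymm (not_lt.mp h) (hπ.1 XY)
  refine ⟨fun p => ∑ XY : Cfg n q × Cfg n q, π XY * c XY p, ⟨?_, ?_, ?_⟩, ?_⟩
  · intro p
    refine Finset.sum_nonneg fun XY _ => ?_
    by_cases h : 0 < π XY
    · exact mul_nonneg (hπ.1 XY) ((hc XY h).1.1 p)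
    · rw [hπz XY h, zero_mul]
  · intro s
    have swap : (∑ t, ∑ XY : Cfg n q × Cfg n q, π XY * c XY (s, t))
        = ∑ XY : Cfg n q × Cfg n q, ∑ t, π XY * c XY (s, t) := Finset.sum_comm
    rw [swap]
    have e1 : ∀ XY : Cfg n q × Cfg n q, (∑ t, π XY * c XY (s, t))
        = π XY * SU.chain U τ XY.1 s := by
      intro XY
      rw [← Finset.mul_sum]
      by_cases h : 0 < π XY
      · rw [(hc XY h).1.2.1 s]
      · rw [hπz XY h, zero_mul, zero_mul]
    rw [Finset.sum_congr rfl fun XY _ => e1 XY, Fintype.sum_prod_type]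
    refine Finset.sum_congr rfl fun X _ => ?_
    dsimp only
    rw [← Finset.sum_mul, hπ.2.1 X]
  · intro t
    have swap : (∑ s, ∑ XY : Cfg n q × Cfg n q, π XY * c XY (s, t))
        = ∑ XY : Cfg n q × Cfg n q, ∑ s, π XY * c XY (s, t) := Finset.sum_comm
    rw [swap]
    have e2 : ∀ XY : Cfg n q × Cfg n q, (∑ s, π XY * c XY (s, t))
        = π XY * SU.chain U τ XY.2 t := by
      intro XY
      rw [← Finset.mul_sum]
      by_cases h : 0 < π XY
      · rw [(hc XY h).1.2.2 t]
      · rw [hπz XY h, zero_mul, zero_mul]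
    rw [Finset.sum_congr rfl fun XY _ => e2 XY]
    have : (∑ XY : Cfg n q × Cfg n q, π XY * SU.chain U τ XY.2 t)
        = ∑ Y, (∑ X, π (X, Y)) * SU.chain U τ Y t := by
      rw [Fintype.sum_prod_type_right]
      exact Finset.sum_congr rfl fun Y _ => by dsimp only; rw [Finset.sum_mul]
    rw [this]
    exact Finset.sum_congr rfl fun Y _ => by rw [hπ.2.2 Y]
  · have expand : (∑ p : Cfg n q × Cfg n q,
        (∑ XY : Cfg n q × Cfg n q, π XY * c XY p) * d p.1 p.2)
        = ∑ XY : Cfg n q × Cfg n q, π XY * ∑ p : Cfg n q × Cfg n q, c XY p * d p.1 p.2 := by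
      have e : ∀ p : Cfg n q × Cfg n q,
          (∑ XY : Cfg n q × Cfg n q, π XY * c XY p) * d p.1 p.2
            = ∑ XY : Cfg n q × Cfg n q, π XY * (c XY p * d p.1 p.2) := by
        intro p
        rw [Finset.sum_mul]
        exact Finset.sum_congr rfl fun XY _ => by ring
      rw [Finset.sum_congr rfl fun p _ => e p, Finset.sum_comm]
      exact Finset.sum_congr rfl fun XY _ => (Finset.mul_sum _ _ _).symm
    rw [expand]
    have bnd : ∀ XY : Cfg n q × Cfg n q,
        π XY * (∑ p : Cfg n q × Cfg n q, c XY p * d p.1 p.2) ≤ π XY * (κ * d XY.1 XY.2) := by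
      intro XY
      by_cases h : 0 < π XY
      · exact mul_le_mul_of_nonneg_left (hc XY h).2 (hπ.1 XY)
      · rw [hπz XY h, zero_mul, zero_mul]
    refine le_trans (Finset.sum_le_sum fun XY _ => bnd XY) ?_
    rw [Finset.mul_sum]
    exact le_of_eq (Finset.sum_congr rfl fun XY _ => by ring)

/-- Step B: coupling one step of the chain under pinning `(U,τ)` with one step of the chain
under the extended pinning, from the same start, with Hamming cost at most `D * M`. -/
lemma stepB (S : SpinSystem n q) (SU : SelectUpdate S) (U : Finset (Fin n)) (τ : Cfg n q)
    {x : Fin n} {a : Fin q} (hx : x ∉ U) (M : ℕ) (D : ℝ) (hD0 : 0 ≤ D)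
    (hM : ∀ B ∈ SU.blocks, B.card ≤ M)
    (hD : ∀ (σ : Cfg n q) (y : Fin n),
      ∑ B ∈ SU.blocks.filter (fun B => y ∈ B), SU.sel σ B ≤ D)
    (ν' : Cfg n q → ℝ) (hν' : IsProb ν') :
    ∃ π'' : Cfg n q × Cfg n q → ℝ,
      IsCoupling π'' (fun s => ∑ σ, ν' σ * SU.chain U τ σ s)
        (fun t => ∑ σ, ν' σ * SU.chain (insert x U) (Function.update τ x a) σ t) ∧
      (∑ p : Cfg n q × Cfg n q, π'' p * dHam p.1 p.2) ≤ D * M := by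
  set U' := insert x U with hU'
  set τ' := Function.update τ x a with hτ'
  have hloc : ∀ (σ : Cfg n q) (B : Finset (Fin n)), x ∉ B →
      SU.upd U τ σ B = SU.upd U' τ' σ B := by
    intro σ B hxB
    refine SU.upd_local U U' τ τ' σ B ?_ ?_
    · ext y
      simp only [hU', Finset.mem_inter, Finset.mem_insert]
      constructor
      · rintro ⟨hyU, hyB⟩; exact ⟨Or.inr hyU, hyB⟩
      · rintro ⟨hyU, hyB⟩
        rcases hyU with rfl | hyU
        · exact absurd hyB hxB
        · exact ⟨hyU, hyB⟩
    · intro y hy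
      have hyU : y ∈ U := (Finset.mem_inter.mp hy).1
      have hyx : y ≠ x := fun he => hx (he ▸ hyU)
      rw [hτ', Function.update_of_ne hyx]
  set c : Cfg n q → Finset (Fin n) → Cfg n q × Cfg n q → ℝ := fun σ B p =>
    if x ∈ B then SU.upd U τ σ B p.1 * SU.upd U' τ' σ B p.2
    else (if p.1 = p.2 then SU.upd U τ σ B p.1 else 0) with hc
  have hcnn : ∀ σ B p, 0 ≤ c σ B p := by
    intro σ B p
    rw [hc]
    dsimp only
    split
    · exact mul_nonneg (SU.upd_nonneg _ _ _ _ _) (SU.upd_nonneg _ _ _ _ _)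
    · split
      · exact SU.upd_nonneg _ _ _ _ _
      · exact le_refl 0
  have hm1 : ∀ (σ : Cfg n q) (B : Finset (Fin n)) (s : Cfg n q),
      (∑ t, c σ B (s, t)) = SU.upd U τ σ B s := by
    intro σ B s
    simp only [hc]
    by_cases hxB : x ∈ B
    · simp only [if_pos hxB]
      rw [← Finset.mul_sum, SU.upd_sum, mul_one]
    · simp only [if_neg hxB]
      simp
  have hm2 : ∀ (σ : Cfg n q) (B : Finset (Fin n)) (t : Cfg n q),
      (∑ s, c σ B (s, t)) = SU.upd U' τ' σ B t := by
    intro σ B t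
    simp only [hc]
    by_cases hxB : x ∈ B
    · simp only [if_pos hxB]
      rw [← Finset.sum_mul, SU.upd_sum, one_mul]
    · simp only [if_neg hxB]
      rw [← hloc σ B hxB]
      simp
  have hcost : ∀ (σ : Cfg n q), ∀ B ∈ SU.blocks,
      (∑ p : Cfg n q × Cfg n q, c σ B p * dHam p.1 p.2) ≤ (if x ∈ B then (M : ℝ) else 0) := by
    intro σ B hB
    by_cases hxB : x ∈ B
    · rw [if_pos hxB]
      have hterm : ∀ p : Cfg n q × Cfg n q,
          c σ B p * dHam p.1 p.2 ≤ c σ B p * (M : ℝ) := by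
        intro p
        by_cases h1 : SU.upd U τ σ B p.1 = 0
        · simp only [hc, if_pos hxB, h1, zero_mul]
          simp
        · by_cases h2 : SU.upd U' τ' σ B p.2 = 0
          · simp only [hc, if_pos hxB, h2, mul_zero, zero_mul]
            simp
          · refine mul_le_mul_of_nonneg_left ?_ (hcnn σ B p)
            refine le_trans (SIspin.dHam_le_of_agree (B := B) ?_) ?_
            · intro y hy
              rw [SU.upd_off U τ σ B p.1 h1 y hy, SU.upd_off U' τ' σ B p.2 h2 y hy]
            · exact_mod_cast Nat.cast_le.mpr (hM B hB)
      refine le_trans (Finset.sum_le_sum fun p _ => hterm p) ?_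
      rw [← Finset.sum_mul]
      have hsum1 : (∑ p : Cfg n q × Cfg n q, c σ B p) = 1 := by
        rw [Fintype.sum_prod_type, Finset.sum_congr rfl fun s _ => hm1 σ B s, SU.upd_sum]
      rw [hsum1, one_mul]
    · rw [if_neg hxB]
      refine le_of_eq (Finset.sum_eq_zero fun p _ => ?_)
      simp only [hc, if_neg hxB]
      by_cases hpe : p.1 = p.2
      · rw [if_pos hpe]
        have : dHam p.1 p.2 = 0 := by rw [hpe]; exact SIspin.dHam_self p.2
        rw [this, mul_zero]
      · rw [if_neg hpe, zero_mul]
  refine ⟨fun p => ∑ σ, ν' σ * ∑ B ∈ SU.blocks, SU.sel σ B * c σ B p, ⟨?_, ?_, ?_⟩, ?_⟩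
  · intro p
    refine Finset.sum_nonneg fun σ _ => mul_nonneg (hν'.1 σ) ?_
    exact Finset.sum_nonneg fun B _ => mul_nonneg (SU.sel_nonneg σ B) (hcnn σ B p)
  · intro s
    have swap : (∑ t, ∑ σ, ν' σ * ∑ B ∈ SU.blocks, SU.sel σ B * c σ B (s, t))
        = ∑ σ, ∑ t, ν' σ * ∑ B ∈ SU.blocks, SU.sel σ B * c σ B (s, t) := Finset.sum_comm
    rw [swap]
    refine Finset.sum_congr rfl fun σ _ => ?_
    rw [← Finset.mul_sum]
    congr 1
    have swap2 : (∑ t, ∑ B ∈ SU.blocks, SU.sel σ B * c σ B (s, t))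
        = ∑ B ∈ SU.blocks, ∑ t, SU.sel σ B * c σ B (s, t) := Finset.sum_comm
    rw [swap2]
    refine Finset.sum_congr rfl fun B _ => ?_
    rw [← Finset.mul_sum, hm1 σ B s]
  · intro t
    have swap : (∑ s, ∑ σ, ν' σ * ∑ B ∈ SU.blocks, SU.sel σ B * c σ B (s, t))
        = ∑ σ, ∑ s, ν' σ * ∑ B ∈ SU.blocks, SU.sel σ B * c σ B (s, t) := Finset.sum_comm
    rw [swap]
    refine Finset.sum_congr rfl fun σ _ => ?_
    rw [← Finset.mul_sum]
    congr 1
    have swap2 : (∑ s, ∑ B ∈ SU.blocks, SU.sel σ B * c σ B (s, t))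
        = ∑ B ∈ SU.blocks, ∑ s, SU.sel σ B * c σ B (s, t) := Finset.sum_comm
    rw [swap2]
    refine Finset.sum_congr rfl fun B _ => ?_
    rw [← Finset.mul_sum, hm2 σ B t]
  · have expand : (∑ p : Cfg n q × Cfg n q,
        (∑ σ, ν' σ * ∑ B ∈ SU.blocks, SU.sel σ B * c σ B p) * dHam p.1 p.2)
        = ∑ σ, ν' σ * ∑ B ∈ SU.blocks, SU.sel σ B *
            ∑ p : Cfg n q × Cfg n q, c σ B p * dHam p.1 p.2 := by
      have e : ∀ p : Cfg n q × Cfg n q,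
          (∑ σ, ν' σ * ∑ B ∈ SU.blocks, SU.sel σ B * c σ B p) * dHam p.1 p.2
            = ∑ σ, ν' σ * ∑ B ∈ SU.blocks, SU.sel σ B * (c σ B p * dHam p.1 p.2) := by
        intro p
        rw [Finset.sum_mul]
        refine Finset.sum_congr rfl fun σ _ => ?_
        rw [mul_assoc, Finset.sum_mul]
        congr 1
        exact Finset.sum_congr rfl fun B _ => by ring
      rw [Finset.sum_congr rfl fun p _ => e p, Finset.sum_comm]
      refine Finset.sum_congr rfl fun σ _ => ?_
      rw [← Finset.mul_sum]
      congr 1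
      rw [Finset.sum_comm]
      exact Finset.sum_congr rfl fun B _ => (Finset.mul_sum _ _ _).symm
    rw [expand]
    have hσbnd : ∀ σ : Cfg n q,
        (∑ B ∈ SU.blocks, SU.sel σ B * ∑ p : Cfg n q × Cfg n q, c σ B p * dHam p.1 p.2)
          ≤ D * M := by
      intro σ
      have step1 : (∑ B ∈ SU.blocks, SU.sel σ B *
            ∑ p : Cfg n q × Cfg n q, c σ B p * dHam p.1 p.2)
          ≤ ∑ B ∈ SU.blocks, SU.sel σ B * (if x ∈ B then (M : ℝ) else 0) := by
        refine Finset.sum_le_sum fun B hB => ?_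
        exact mul_le_mul_of_nonneg_left (hcost σ B hB) (SU.sel_nonneg σ B)
      refine le_trans step1 ?_
      have step2 : (∑ B ∈ SU.blocks, SU.sel σ B * (if x ∈ B then (M : ℝ) else 0))
          = (∑ B ∈ SU.blocks.filter (fun B => x ∈ B), SU.sel σ B) * M := by
        rw [Finset.sum_mul, Finset.sum_filter]
        refine Finset.sum_congr rfl fun B _ => ?_
        by_cases hxB : x ∈ B <;> simp [hxB]
      rw [step2]
      exact mul_le_mul_of_nonneg_right (hD σ x) (Nat.cast_nonneg M)
    calc (∑ σ, ν' σ * ∑ B ∈ SU.blocks, SU.sel σ B *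
            ∑ p : Cfg n q × Cfg n q, c σ B p * dHam p.1 p.2)
        ≤ ∑ σ : Cfg n q, ν' σ * (D * M) := by
          refine Finset.sum_le_sum fun σ _ => ?_
          exact mul_le_mul_of_nonneg_left (hσbnd σ) (hν'.1 σ)
      _ = D * M := by rw [← Finset.sum_mul, hν'.2, one_mul]

end SIsteps

/-- contraction of a select-update dynamics with maximum block size `M` and
maximum vertex-selection probability `D`, with respect to a metric `γ`-equivalent to the
Hamming metric, implies spectral independence with constant `2γ²DM/(1-κ)`. -/
theorem selectUpdate_contraction_implies_SI
    {n q : ℕ} (S : SpinSystem n q) (hTC : S.TotallyConnected)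
    (γ : ℝ) (hγ : 1 ≤ γ)
    (d : Cfg n q → Cfg n q → ℝ) (hd : IsMetricFn d) (hequiv : GammaEquiv γ d)
    (SU : SelectUpdate S) (M : ℕ) (D : ℝ)
    (hM : ∀ B ∈ SU.blocks, B.card ≤ M)
    (hD : ∀ (σ : Cfg n q) (x : Fin n),
      ∑ B ∈ SU.blocks.filter (fun B => x ∈ B), SU.sel σ B ≤ D)
    (κ : ℝ) (hκ0 : 0 < κ) (hκ1 : κ < 1)
    (hcon : ContractiveFam S SU.chain d κ) :
    S.SpectrallyIndependent (2 * γ ^ 2 * D * M / (1 - κ)) := by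
  intro U τ hpin t φ hzero hφne hEig
  have hγpos : (0 : ℝ) < γ := lt_of_lt_of_le one_pos hγ
  have hdnn : ∀ a b, 0 ≤ d a b := by
    intro a b
    rcases eq_or_ne a b with rfl | h
    · exact le_of_eq (hd.refl a).symm
    · exact (hd.pos a b h).le
  have hdHam_le : ∀ a b, dHam a b ≤ γ * d a b := by
    intro a b
    have h1 := (hequiv a b).1
    calc dHam a b = γ * ((1 / γ) * dHam a b) := by field_simp
      _ ≤ γ * d a b := mul_le_mul_of_nonneg_left h1 hγpos.le
  have hd_le : ∀ a b, d a b ≤ γ * dHam a b := fun a b => (hequiv a b).2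
  -- the maximising coordinate of the eigenvector
  obtain ⟨p0, hp0''⟩ := Function.ne_iff.mp hφne
  have hp0 : φ p0 ≠ 0 := by simpa using hp0''
  obtain ⟨ps, -, hmax⟩ := Finset.exists_max_image (Finset.univ : Finset (Fin n × Fin q))
    (fun p => |φ p|) ⟨p0, Finset.mem_univ p0⟩
  have hφps : 0 < |φ ps| :=
    lt_of_lt_of_le (abs_pos.mpr hp0) (hmax p0 (Finset.mem_univ p0))
  have hallow : S.allowed U τ ps.1 ps.2 := by
    by_contra hna
    rw [hzero ps hna, abs_zero] at hφps
    exact lt_irrefl 0 hφps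
  obtain ⟨hx, hmarg⟩ := hallow
  set U' := insert ps.1 U with hU'
  set τ' := Function.update τ ps.1 ps.2 with hτ'
  have hpin' : S.IsPinning U' τ' := SIspin.isPinning_insert S hx hmarg
  set μ := S.condMu U τ with hμdef
  set ν := S.condMu U' τ' with hνdef
  have hμP : IsProb μ := SIspin.condMu_isProb S hpin
  have hνP : IsProb ν := SIspin.condMu_isProb S hpin'
  have hμsupp : ∀ X, 0 < μ X → 0 < S.condWt U τ X := fun X h =>
    SIspin.condWt_pos_of_condMu_pos S h
  have hνsupp : ∀ Y, 0 < ν Y → 0 < S.condWt U τ Y := fun Y h =>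
    SIspin.condWt_insert_pos S hx (SIspin.condWt_pos_of_condMu_pos S h)
  obtain ⟨σany, -, -⟩ := id hpin'
  have hD0 : 0 ≤ D :=
    le_trans (Finset.sum_nonneg fun B _ => SU.sel_nonneg σany B) (hD σany ps.1)
  have hκ' : (0 : ℝ) < 1 - κ := by linarith
  set Wd := W1 d μ ν with hWddef
  have hne : ∃ π : Cfg n q × Cfg n q → ℝ, IsCoupling π μ ν :=
    ⟨_, SIhelp.prod_coupling hμP hνP⟩
  -- the contraction inequality for the Wasserstein distance
  have hWmain : Wd ≤ κ * Wd + γ * (D * M) := by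
    refine le_of_forall_pos_le_add ?_
    intro ε hε
    obtain ⟨πe, hπe, hπecost⟩ := SIhelp.exists_coupling_lt (d := d) hne (div_pos hε hκ0)
    have hss : ∀ XY : Cfg n q × Cfg n q, 0 < πe XY →
        0 < S.condWt U τ XY.1 ∧ 0 < S.condWt U τ XY.2 := by
      rintro ⟨X, Y⟩ h
      have hX : 0 < μ X := lt_of_lt_of_le h
        ((Finset.single_le_sum (fun i _ => hπe.1 (X, i)) (Finset.mem_univ Y)).trans
          (le_of_eq (hπe.2.1 X)))
      have hY : 0 < ν Y := lt_of_lt_of_le h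
        ((Finset.single_le_sum (fun i _ => hπe.1 (i, Y)) (Finset.mem_univ X)).trans
          (le_of_eq (hπe.2.2 Y)))
      exact ⟨hμsupp X hX, hνsupp Y hY⟩
    obtain ⟨π1, hπ1, hπ1cost⟩ := SIsteps.stepA S SU hpin d κ hcon μ ν πe hπe hss
    have hstat1 : (fun s => ∑ X, μ X * SU.chain U τ X s) = μ :=
      funext fun s => SU.stat U τ hpin s
    rw [hstat1] at hπ1
    obtain ⟨π2, hπ2, hπ2cost⟩ := SIsteps.stepB S SU U τ hx M D hD0 hM hD ν hνP
    have hstat2 : (fun s => ∑ σ, ν σ * SU.chain U' τ' σ s) = ν :=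
      funext fun s => SU.stat U' τ' hpin' s
    rw [hstat2] at hπ2
    obtain ⟨PP, hPP, hPPcost⟩ := SIhelp.glue_coupling d hd.triangle hπ1 hπ2
    have hπ2d : (∑ p : Cfg n q × Cfg n q, π2 p * d p.1 p.2) ≤ γ * (D * M) := by
      calc (∑ p : Cfg n q × Cfg n q, π2 p * d p.1 p.2)
          ≤ ∑ p : Cfg n q × Cfg n q, π2 p * (γ * dHam p.1 p.2) :=
            Finset.sum_le_sum fun p _ =>
              mul_le_mul_of_nonneg_left (hd_le _ _) (hπ2.1 p)
        _ = γ * ∑ p : Cfg n q × Cfg n q, π2 p * dHam p.1 p.2 := by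
            rw [Finset.mul_sum]
            exact Finset.sum_congr rfl fun p _ => by ring
        _ ≤ γ * (D * M) := mul_le_mul_of_nonneg_left hπ2cost hγpos.le
    have hWle : Wd ≤ ∑ p : Cfg n q × Cfg n q, PP p * d p.1 p.2 := SIhelp.W1_le hdnn hPP
    have hπ1le : (∑ p : Cfg n q × Cfg n q, π1 p * d p.1 p.2) ≤ κ * (Wd + ε / κ) :=
      le_trans hπ1cost (mul_le_mul_of_nonneg_left hπecost.le hκ0.le)
    have hκε : κ * (Wd + ε / κ) = κ * Wd + ε := by
      field_simp
    have := le_trans hWle (le_trans hPPcost (add_le_add hπ1le hπ2d))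
    rw [hκε] at this
    linarith
  have hWbound : Wd ≤ γ * (D * M) / (1 - κ) := by
    rw [le_div_iff₀ hκ']
    nlinarith [hWmain]
  -- the row sum of influences is at most 2γ·Wd
  set R := ∑ p' : Fin n × Fin q, |S.Jmat U τ ps p'| with hRdef
  have hJle : ∀ p' : Fin n × Fin q, |S.Jmat U τ ps p'|
      ≤ |S.margin U' τ' p'.1 p'.2 - S.margin U τ p'.1 p'.2| := by
    intro p'
    unfold SpinSystem.Jmat
    split
    · rw [abs_zero]; exact abs_nonneg _
    · split
      · rw [← hU', ← hτ']
      · rw [abs_zero]; exact abs_nonneg _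
  have hRle : R ≤ 2 * γ * Wd := by
    refine le_of_forall_pos_le_add ?_
    intro ε hε
    have h2γ : (0 : ℝ) < 2 * γ := by positivity
    obtain ⟨PP, hPP, hPPc⟩ := SIhelp.exists_coupling_lt (d := d) hne (div_pos hε h2γ)
    -- margins through the coupling
    have hmargμ : ∀ y b, S.margin U τ y b
        = ∑ p : Cfg n q × Cfg n q, PP p * (if p.1 y = b then (1 : ℝ) else 0) := by
      intro y b
      unfold SpinSystem.margin
      rw [Fintype.sum_prod_type]
      refine Finset.sum_congr rfl fun σ _ => ?_
      have : (if σ y = b then S.condMu U τ σ else 0)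
          = μ σ * (if σ y = b then (1 : ℝ) else 0) := by
        by_cases h : σ y = b <;> simp [h, hμdef]
      rw [this, ← hPP.2.1 σ, Finset.sum_mul]
    have hmargν : ∀ y b, S.margin U' τ' y b
        = ∑ p : Cfg n q × Cfg n q, PP p * (if p.2 y = b then (1 : ℝ) else 0) := by
      intro y b
      unfold SpinSystem.margin
      rw [Fintype.sum_prod_type_right]
      refine Finset.sum_congr rfl fun σ _ => ?_
      have : (if σ y = b then S.condMu U' τ' σ else 0)
          = ν σ * (if σ y = b then (1 : ℝ) else 0) := by
        by_cases h : σ y = b <;> simp [h, hνdef]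
      rw [this, ← hPP.2.2 σ, Finset.sum_mul]
    have hΔ : ∀ p' : Fin n × Fin q,
        S.margin U' τ' p'.1 p'.2 - S.margin U τ p'.1 p'.2
          = ∑ p : Cfg n q × Cfg n q, PP p *
              ((if p.2 p'.1 = p'.2 then (1 : ℝ) else 0) -
                (if p.1 p'.1 = p'.2 then (1 : ℝ) else 0)) := by
      intro p'
      rw [hmargν p'.1 p'.2, hmargμ p'.1 p'.2, ← Finset.sum_sub_distrib]
      exact Finset.sum_congr rfl fun p _ => by ring
    have hRkey : R ≤ 2 * ∑ p : Cfg n q × Cfg n q, PP p * dHam p.1 p.2 := by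
      have step1 : R ≤ ∑ p' : Fin n × Fin q,
          ∑ p : Cfg n q × Cfg n q, PP p *
            |(if p.2 p'.1 = p'.2 then (1 : ℝ) else 0) -
              (if p.1 p'.1 = p'.2 then (1 : ℝ) else 0)| := by
        refine Finset.sum_le_sum fun p' _ => ?_
        refine le_trans (hJle p') ?_
        rw [hΔ p']
        refine le_trans (Finset.abs_sum_le_sum_abs _ _) ?_
        refine Finset.sum_le_sum fun p _ => ?_
        rw [abs_mul, abs_of_nonneg (hPP.1 p)]
      refine le_trans step1 ?_
      rw [Finset.sum_comm]
      have inner : ∀ p : Cfg n q × Cfg n q,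
          (∑ p' : Fin n × Fin q, PP p *
            |(if p.2 p'.1 = p'.2 then (1 : ℝ) else 0) -
              (if p.1 p'.1 = p'.2 then (1 : ℝ) else 0)|)
            = PP p * (2 * dHam p.1 p.2) := by
        intro p
        rw [← Finset.mul_sum, SIspin.sum_abs_indicator p.1 p.2]
      rw [Finset.sum_congr rfl fun p _ => inner p, Finset.mul_sum]
      exact le_of_eq (Finset.sum_congr rfl fun p _ => by ring)
    have hHd : (∑ p : Cfg n q × Cfg n q, PP p * dHam p.1 p.2)
        ≤ γ * ∑ p : Cfg n q × Cfg n q, PP p * d p.1 p.2 := by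
      rw [Finset.mul_sum]
      refine Finset.sum_le_sum fun p _ => ?_
      calc PP p * dHam p.1 p.2 ≤ PP p * (γ * d p.1 p.2) :=
            mul_le_mul_of_nonneg_left (hdHam_le _ _) (hPP.1 p)
        _ = γ * (PP p * d p.1 p.2) := by ring
    have : R ≤ 2 * (γ * (Wd + ε / (2 * γ))) := by
      refine le_trans hRkey ?_
      have h1 : (∑ p : Cfg n q × Cfg n q, PP p * dHam p.1 p.2)
          ≤ γ * (Wd + ε / (2 * γ)) :=
        le_trans hHd (mul_le_mul_of_nonneg_left hPPc.le hγpos.le)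
      linarith
    refine le_trans this (le_of_eq ?_)
    field_simp
  -- conclude: |t| ≤ R ≤ 2γ²DM/(1-κ)
  have hfinal : R ≤ 2 * γ ^ 2 * D * M / (1 - κ) := by
    refine le_trans hRle ?_
    have h2γ : (0 : ℝ) ≤ 2 * γ := by positivity
    calc 2 * γ * Wd ≤ 2 * γ * (γ * (D * M) / (1 - κ)) :=
          mul_le_mul_of_nonneg_left hWbound h2γ
      _ = 2 * γ ^ 2 * D * M / (1 - κ) := by
          field_simp
  have habs : |t| * |φ ps| ≤ R * |φ ps| := by
    have h1 : |t| * |φ ps| = |∑ p' : Fin n × Fin q, S.Jmat U τ ps p' * φ p'| := by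
      rw [hEig ps, abs_mul]
    rw [h1]
    refine le_trans (Finset.abs_sum_le_sum_abs _ _) ?_
    rw [Finset.sum_mul]
    refine Finset.sum_le_sum fun p' _ => ?_
    rw [abs_mul]
    exact mul_le_mul_of_nonneg_left (hmax p' (Finset.mem_univ p')) (abs_nonneg _)
  have htR : |t| ≤ R := le_of_mul_le_mul_right habs hφps
  exact le_trans (le_trans (le_abs_self t) htR) hfinal
end
end

section
/- Let μ be the Gibbs distribution of a totally-connected q-state spin system, let {P^τ} be a Φ-local family of Markov chains associated with μ, let γ ≥ 1, let d be any metric on configurations that is γ-equivalent to the Hamming metric, and let κ ∈ (0,1). If μ is κ-contractive with respect to {P^τ} and d, then μ is spectrally independent with constant η = 2γ²·Φ/(1−κ). -/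
open scoped BigOperators
open Classical
noncomputable section

namespace SIAux
open Finset
variable {Ω : Type*} [Fintype Ω]

lemma metricFn_nonneg {d : Ω → Ω → ℝ} (hd : IsMetricFn d) (a b : Ω) : 0 ≤ d a b := by
  have h := hd.triangle a b a
  rw [hd.refl a, hd.symm b a] at h
  linarith

lemma coupling_total {π : Ω × Ω → ℝ} {μ ν : Ω → ℝ} (h : IsCoupling π μ ν)
    (hμ : ∑ s, μ s = 1) : ∑ p : Ω × Ω, π p = 1 := by
  rw [Fintype.sum_prod_type]
  simp_rw [h.2.1]; exact hμ

lemma coupling_fst_pos {π : Ω × Ω → ℝ} {μ ν : Ω → ℝ} (h : IsCoupling π μ ν)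
    {p : Ω × Ω} (hp : 0 < π p) : 0 < μ p.1 := by
  calc (0:ℝ) < π p := hp
    _ = π (p.1, p.2) := by rw [Prod.mk.eta]
    _ ≤ ∑ s', π (p.1, s') := Finset.single_le_sum (f := fun s' => π (p.1, s')) (fun i _ => h.1 _) (mem_univ p.2)
    _ = μ p.1 := h.2.1 p.1

lemma coupling_snd_pos {π : Ω × Ω → ℝ} {μ ν : Ω → ℝ} (h : IsCoupling π μ ν)
    {p : Ω × Ω} (hp : 0 < π p) : 0 < ν p.2 := by
  calc (0:ℝ) < π p := hp
    _ = π (p.1, p.2) := by rw [Prod.mk.eta]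
    _ ≤ ∑ s, π (s, p.2) := Finset.single_le_sum (f := fun s => π (s, p.2)) (fun i _ => h.1 _) (mem_univ p.1)
    _ = ν p.2 := h.2.2 p.2

lemma prod_isCoupling {μ ν : Ω → ℝ} (hμ : IsProb μ) (hν : IsProb ν) :
    IsCoupling (fun p : Ω × Ω => μ p.1 * ν p.2) μ ν := by
  refine ⟨fun p => mul_nonneg (hμ.1 _) (hν.1 _), fun s => ?_, fun s' => ?_⟩
  · simp only; rw [← Finset.mul_sum, hν.2, mul_one]
  · simp only; rw [← Finset.sum_mul, hμ.2, one_mul]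

lemma swap_isCoupling {μ ν : Ω → ℝ} {π : Ω × Ω → ℝ} (h : IsCoupling π μ ν) :
    IsCoupling (fun p : Ω × Ω => π (p.2, p.1)) ν μ :=
  ⟨fun p => h.1 _, fun s => h.2.2 s, fun s' => h.2.1 s'⟩

lemma swap_expec {d : Ω → Ω → ℝ} (hsymm : ∀ a b, d a b = d b a) (π : Ω × Ω → ℝ) :
    ∑ p : Ω × Ω, π (p.2, p.1) * d p.1 p.2 = ∑ p : Ω × Ω, π p * d p.1 p.2 := by
  rw [Fintype.sum_prod_type, Finset.sum_comm, Fintype.sum_prod_type]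
  refine Finset.sum_congr rfl fun a _ => Finset.sum_congr rfl fun b _ => ?_
  simp [hsymm a b]

lemma W1_nonneg {d : Ω → Ω → ℝ} (hd0 : ∀ a b, 0 ≤ d a b) (μ ν : Ω → ℝ) :
    0 ≤ W1 d μ ν := by
  apply Real.sInf_nonneg
  rintro r ⟨π, hπ, rfl⟩
  exact Finset.sum_nonneg fun p _ => mul_nonneg (hπ.1 p) (hd0 _ _)

lemma W1_le_of_coupling {d : Ω → Ω → ℝ} (hd0 : ∀ a b, 0 ≤ d a b) {μ ν : Ω → ℝ}
    {π : Ω × Ω → ℝ} (hπ : IsCoupling π μ ν) :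
    W1 d μ ν ≤ ∑ p : Ω × Ω, π p * d p.1 p.2 := by
  apply csInf_le
  · refine ⟨0, ?_⟩
    rintro r ⟨π', hπ', rfl⟩
    exact Finset.sum_nonneg fun p _ => mul_nonneg (hπ'.1 p) (hd0 _ _)
  · exact ⟨π, hπ, rfl⟩

lemma le_W1 {d : Ω → Ω → ℝ} {μ ν : Ω → ℝ} {c : ℝ}
    (hne : ∃ π : Ω × Ω → ℝ, IsCoupling π μ ν)
    (h : ∀ π : Ω × Ω → ℝ, IsCoupling π μ ν → c ≤ ∑ p : Ω × Ω, π p * d p.1 p.2) :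
    c ≤ W1 d μ ν := by
  obtain ⟨π0, hπ0⟩ := hne
  exact le_csInf ⟨_, π0, hπ0, rfl⟩ (by rintro r ⟨π, hπ, rfl⟩; exact h π hπ)

lemma exists_coupling_close (d : Ω → Ω → ℝ) {μ ν : Ω → ℝ}
    (hne : ∃ π : Ω × Ω → ℝ, IsCoupling π μ ν) {ε : ℝ} (hε : 0 < ε) :
    ∃ π : Ω × Ω → ℝ, IsCoupling π μ ν ∧
      ∑ p : Ω × Ω, π p * d p.1 p.2 < W1 d μ ν + ε := by
  obtain ⟨π0, hπ0⟩ := hne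
  obtain ⟨r, ⟨π, hπ, rfl⟩, hr⟩ := Real.lt_sInf_add_pos (⟨_, π0, hπ0, rfl⟩ :
    Set.Nonempty {r | ∃ π : Ω × Ω → ℝ, IsCoupling π μ ν ∧ r = ∑ p, π p * d p.1 p.2}) hε
  exact ⟨π, hπ, hr⟩

lemma glue_coupling {d : Ω → Ω → ℝ} (hd : IsMetricFn d)
    {μ1 μ2 μ3 : Ω → ℝ} {π1 π2 : Ω × Ω → ℝ}
    (h1 : IsCoupling π1 μ1 μ2) (h2 : IsCoupling π2 μ2 μ3) :
    ∃ π3 : Ω × Ω → ℝ, IsCoupling π3 μ1 μ3 ∧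
      ∑ p : Ω × Ω, π3 p * d p.1 p.2 ≤
        (∑ p : Ω × Ω, π1 p * d p.1 p.2) + ∑ p : Ω × Ω, π2 p * d p.1 p.2 := by
  have hμ2 : ∀ b, ∑ a, π1 (a, b) = μ2 b := h1.2.2
  have hrow : ∀ b, ∑ c, π2 (b, c) = μ2 b := h2.2.1
  have hμ2nn : ∀ b, 0 ≤ μ2 b := fun b =>
    (hμ2 b) ▸ Finset.sum_nonneg (fun a _ => h1.1 _)
  have hz1 : ∀ a b, μ2 b = 0 → π1 (a, b) = 0 := by
    intro a b hb
    have h1' : π1 (a, b) ≤ μ2 b := (hμ2 b) ▸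
      Finset.single_le_sum (f := fun a => π1 (a, b)) (fun i _ => h1.1 _) (mem_univ a)
    exact le_antisymm (hb ▸ h1') (h1.1 _)
  refine ⟨fun p => ∑ b, π1 (p.1, b) * π2 (b, p.2) / μ2 b, ⟨?_, ?_, ?_⟩, ?_⟩
  · intro p
    exact Finset.sum_nonneg fun b _ =>
      div_nonneg (mul_nonneg (h1.1 _) (h2.1 _)) (hμ2nn b)
  · intro s
    rw [Finset.sum_comm]
    have : ∀ b, ∑ s', π1 (s, b) * π2 (b, s') / μ2 b = π1 (s, b) := by
      intro b
      rw [← Finset.sum_div, ← Finset.mul_sum, hrow b]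
      by_cases hb : μ2 b = 0
      · rw [hz1 s b hb]; simp
      · field_simp
    rw [Finset.sum_congr rfl fun b _ => this b]
    exact h1.2.1 s
  · intro s'
    rw [Finset.sum_comm]
    have : ∀ b, ∑ s, π1 (s, b) * π2 (b, s') / μ2 b = π2 (b, s') := by
      intro b
      rw [← Finset.sum_div, ← Finset.sum_mul, hμ2 b]
      by_cases hb : μ2 b = 0
      · have : π2 (b, s') = 0 := by
          have h2' : π2 (b, s') ≤ μ2 b := (hrow b) ▸
            Finset.single_le_sum (f := fun c => π2 (b, c)) (fun i _ => h2.1 _) (mem_univ s')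
          exact le_antisymm (hb ▸ h2') (h2.1 _)
        rw [hb, this]; simp
      · field_simp
    rw [Finset.sum_congr rfl fun b _ => this b]
    exact h2.2.2 s'
  · -- expectation bound
    have hz2 : ∀ b c, μ2 b = 0 → π2 (b, c) = 0 := by
      intro b c hb
      have h2' : π2 (b, c) ≤ μ2 b := (hrow b) ▸
        Finset.single_le_sum (f := fun c => π2 (b, c)) (fun i _ => h2.1 _) (mem_univ c)
      exact le_antisymm (hb ▸ h2') (h2.1 _)
    have key : ∑ p : Ω × Ω, (∑ b, π1 (p.1, b) * π2 (b, p.2) / μ2 b) * d p.1 p.2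
        = ∑ b, ∑ a, ∑ c, π1 (a, b) * π2 (b, c) / μ2 b * d a c := by
      rw [Fintype.sum_prod_type]
      simp_rw [Finset.sum_mul]
      have h1' : ∀ a : Ω, ∑ c, ∑ b, π1 (a, b) * π2 (b, c) / μ2 b * d a c
          = ∑ b, ∑ c, π1 (a, b) * π2 (b, c) / μ2 b * d a c := fun a => Finset.sum_comm
      simp_rw [h1']
      exact Finset.sum_comm
    rw [key]
    have step : ∀ b, ∑ a, ∑ c, π1 (a, b) * π2 (b, c) / μ2 b * d a c
        ≤ (∑ a, π1 (a, b) * d a b) + ∑ c, π2 (b, c) * d b c := by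
      intro b
      by_cases hb : μ2 b = 0
      · have e1 : ∀ a, π1 (a, b) = 0 := fun a => hz1 a b hb
        have e2 : ∀ c, π2 (b, c) = 0 := fun c => hz2 b c hb
        simp [e1, e2]
      · have hle : ∑ a, ∑ c, π1 (a, b) * π2 (b, c) / μ2 b * d a c
            ≤ ∑ a, ∑ c, π1 (a, b) * π2 (b, c) / μ2 b * (d a b + d b c) := by
          refine Finset.sum_le_sum fun a _ => Finset.sum_le_sum fun c _ => ?_
          exact mul_le_mul_of_nonneg_left (hd.triangle a b c)
            (div_nonneg (mul_nonneg (h1.1 _) (h2.1 _)) (hμ2nn b))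
        refine hle.trans (le_of_eq ?_)
        simp_rw [mul_add]
        simp_rw [Finset.sum_add_distrib]
        have t1 : ∀ a : Ω, ∑ c, π1 (a, b) * π2 (b, c) / μ2 b * d a b
            = π1 (a, b) * d a b := by
          intro a
          rw [← Finset.sum_mul, ← Finset.sum_div, ← Finset.mul_sum, hrow b,
            mul_div_assoc, div_self hb, mul_one]
        have t2 : ∑ a, ∑ c, π1 (a, b) * π2 (b, c) / μ2 b * d b c
            = ∑ c, π2 (b, c) * d b c := by
          rw [Finset.sum_comm]
          refine Finset.sum_congr rfl fun c _ => ?_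
          rw [← Finset.sum_mul, ← Finset.sum_div, ← Finset.sum_mul, hμ2 b,
            mul_comm (μ2 b), mul_div_assoc, div_self hb, mul_one]
        rw [t2]
        congr 1
        exact Finset.sum_congr rfl fun a _ => t1 a
    calc ∑ b, ∑ a, ∑ c, π1 (a, b) * π2 (b, c) / μ2 b * d a c
        ≤ ∑ b, ((∑ a, π1 (a, b) * d a b) + ∑ c, π2 (b, c) * d b c) :=
          Finset.sum_le_sum fun b _ => step b
      _ = (∑ b, ∑ a, π1 (a, b) * d a b) + ∑ b, ∑ c, π2 (b, c) * d b c :=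
          Finset.sum_add_distrib
      _ = (∑ p : Ω × Ω, π1 p * d p.1 p.2) + ∑ p : Ω × Ω, π2 p * d p.1 p.2 := by
          rw [Fintype.sum_prod_type, Fintype.sum_prod_type, Finset.sum_comm]
end SIAux

namespace SIAux
variable {n q : ℕ}
open Finset

lemma wt_nonneg (S : SpinSystem n q) (σ : Cfg n q) : 0 ≤ S.wt σ := by
  unfold SpinSystem.wt
  apply mul_nonneg
  · refine Finset.prod_nonneg fun x _ => Finset.prod_nonneg fun y _ => ?_
    split
    · exact S.A_nonneg _ _ _ _
    · exact zero_le_one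
  · exact Finset.prod_nonneg fun x _ => S.B_nonneg _ _

lemma condWt_nonneg (S : SpinSystem n q) (U : Finset (Fin n)) (τ σ : Cfg n q) :
    0 ≤ S.condWt U τ σ := by
  unfold SpinSystem.condWt
  split
  · exact wt_nonneg S σ
  · exact le_refl 0

lemma condZ_pos {S : SpinSystem n q} {U : Finset (Fin n)} {τ : Cfg n q}
    (h : S.IsPinning U τ) : 0 < S.condZ U τ := by
  obtain ⟨σ, hw, hag⟩ := h
  have hσ : 0 < S.condWt U τ σ := by
    unfold SpinSystem.condWt; rw [if_pos hag]; exact hw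
  exact lt_of_lt_of_le hσ (Finset.single_le_sum
    (f := fun σ => S.condWt U τ σ) (fun i _ => condWt_nonneg S U τ i) (mem_univ σ))

lemma condMu_nonneg (S : SpinSystem n q) (U : Finset (Fin n)) (τ σ : Cfg n q) :
    0 ≤ S.condMu U τ σ :=
  div_nonneg (condWt_nonneg S U τ σ)
    (Finset.sum_nonneg fun σ' _ => condWt_nonneg S U τ σ')

lemma condMu_isProb {S : SpinSystem n q} {U : Finset (Fin n)} {τ : Cfg n q}
    (h : S.IsPinning U τ) : IsProb (S.condMu U τ) := by
  refine ⟨fun σ => condMu_nonneg S U τ σ, ?_⟩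
  unfold SpinSystem.condMu
  rw [← Finset.sum_div]
  rw [show (∑ i : Cfg n q, S.condWt U τ i) = S.condZ U τ from rfl]
  exact div_self (condZ_pos h).ne'

lemma condWt_pos_of_condMu_pos {S : SpinSystem n q} {U : Finset (Fin n)} {τ σ : Cfg n q}
    (h : 0 < S.condMu U τ σ) : 0 < S.condWt U τ σ := by
  by_contra hc
  have h0 : S.condWt U τ σ = 0 := le_antisymm (not_lt.mp hc) (condWt_nonneg S U τ σ)
  rw [SpinSystem.condMu, h0, zero_div] at h
  exact lt_irrefl 0 h

lemma condWt_pos_of_insert {S : SpinSystem n q} {U : Finset (Fin n)} {τ : Cfg n q}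
    {x : Fin n} (hx : x ∉ U) {a : Fin q} {σ : Cfg n q}
    (h : 0 < S.condWt (insert x U) (Function.update τ x a) σ) : 0 < S.condWt U τ σ := by
  unfold SpinSystem.condWt at h ⊢
  split at h
  case isTrue hag =>
    rw [if_pos]
    · exact h
    · intro y hy
      have hyx : y ≠ x := fun e => hx (e ▸ hy)
      have h' := hag y (Finset.mem_insert_of_mem hy)
      rwa [Function.update_of_ne hyx] at h'
  case isFalse => exact absurd h (lt_irrefl 0)

lemma dHam_nonneg (σ1 σ2 : Cfg n q) : 0 ≤ dHam σ1 σ2 := Nat.cast_nonneg _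

lemma dHam_comm (σ1 σ2 : Cfg n q) : dHam σ1 σ2 = dHam σ2 σ1 := by
  unfold dHam hamming
  congr 1
  apply Finset.card_bij (fun a _ => a)
  · intro a ha; simp only [Finset.mem_filter, Finset.mem_univ, true_and] at ha ⊢
    exact ha.symm
  · intro a _ b _ h; exact h
  · intro b hb; refine ⟨b, ?_, rfl⟩
    simp only [Finset.mem_filter, Finset.mem_univ, true_and] at hb ⊢
    exact hb.symm

lemma sum_abs_indicator (σ1 σ2 : Cfg n q) :
    ∑ y : Fin n, ∑ b : Fin q,
      |(if σ1 y = b then (1:ℝ) else 0) - (if σ2 y = b then 1 else 0)|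
      = 2 * dHam σ1 σ2 := by
  have inner : ∀ y : Fin n, ∑ b : Fin q,
      |(if σ1 y = b then (1:ℝ) else 0) - (if σ2 y = b then 1 else 0)|
      = if σ1 y = σ2 y then 0 else 2 := by
    intro y
    by_cases h : σ1 y = σ2 y
    · rw [if_pos h, h]
      simp
    · rw [if_neg h]
      have e : ∀ b : Fin q, |(if σ1 y = b then (1:ℝ) else 0) - (if σ2 y = b then 1 else 0)|
          = (if σ1 y = b then (1:ℝ) else 0) + (if σ2 y = b then 1 else 0) := by
        intro b
        by_cases h1 : σ1 y = b <;> by_cases h2 : σ2 y = b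
        · exact absurd (h1.trans h2.symm) h
        · simp [h1, h2]
        · simp [h1, h2]
        · simp [h1, h2]
      rw [Finset.sum_congr rfl fun b _ => e b, Finset.sum_add_distrib]
      simp
      norm_num
  rw [Finset.sum_congr rfl fun y _ => inner y]
  unfold dHam hamming
  have e : ∀ y : Fin n, (if σ1 y = σ2 y then (0:ℝ) else 2)
      = if σ1 y ≠ σ2 y then (2:ℝ) else 0 := by
    intro y; by_cases h : σ1 y = σ2 y <;> simp [h]
  rw [Finset.sum_congr rfl fun y _ => e y, ← Finset.sum_filter, Finset.sum_const,
    nsmul_eq_mul, mul_comm]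

lemma margin_diff_bound (S : SpinSystem n q) (U U' : Finset (Fin n)) (τ τ' : Cfg n q)
    {π : Cfg n q × Cfg n q → ℝ}
    (hπ : IsCoupling π (S.condMu U' τ') (S.condMu U τ)) :
    ∑ p' : Fin n × Fin q, |S.margin U' τ' p'.1 p'.2 - S.margin U τ p'.1 p'.2|
      ≤ 2 * ∑ p : Cfg n q × Cfg n q, π p * dHam p.1 p.2 := by
  have hdiff : ∀ (y : Fin n) (b : Fin q),
      S.margin U' τ' y b - S.margin U τ y b
        = ∑ p : Cfg n q × Cfg n q, π p *
            ((if p.1 y = b then (1:ℝ) else 0) - (if p.2 y = b then 1 else 0)) := by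
    intro y b
    have e1 : S.margin U' τ' y b
        = ∑ p : Cfg n q × Cfg n q, π p * (if p.1 y = b then (1:ℝ) else 0) := by
      unfold SpinSystem.margin
      rw [Fintype.sum_prod_type]
      refine Finset.sum_congr rfl fun σ _ => ?_
      rw [← hπ.2.1 σ]
      by_cases h : σ y = b
      · simp [h]
      · simp [h]
    have e2 : S.margin U τ y b
        = ∑ p : Cfg n q × Cfg n q, π p * (if p.2 y = b then (1:ℝ) else 0) := by
      unfold SpinSystem.margin
      rw [Fintype.sum_prod_type]
      rw [Finset.sum_comm]
      refine Finset.sum_congr rfl fun σ2 _ => ?_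
      rw [← hπ.2.2 σ2]
      by_cases h : σ2 y = b
      · simp [h, Finset.sum_mul]
      · simp [h]
    rw [e1, e2, ← Finset.sum_sub_distrib]
    refine Finset.sum_congr rfl fun p _ => ?_
    ring
  have habs : ∀ (y : Fin n) (b : Fin q),
      |S.margin U' τ' y b - S.margin U τ y b|
        ≤ ∑ p : Cfg n q × Cfg n q, π p *
            |(if p.1 y = b then (1:ℝ) else 0) - (if p.2 y = b then 1 else 0)| := by
    intro y b
    rw [hdiff y b]
    refine (Finset.abs_sum_le_sum_abs _ _).trans (le_of_eq ?_)
    refine Finset.sum_congr rfl fun p _ => ?_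
    rw [abs_mul, abs_of_nonneg (hπ.1 p)]
  calc ∑ p' : Fin n × Fin q, |S.margin U' τ' p'.1 p'.2 - S.margin U τ p'.1 p'.2|
      ≤ ∑ p' : Fin n × Fin q, ∑ p : Cfg n q × Cfg n q, π p *
          |(if p.1 p'.1 = p'.2 then (1:ℝ) else 0) - (if p.2 p'.1 = p'.2 then 1 else 0)| := by
        refine Finset.sum_le_sum fun p' _ => habs p'.1 p'.2
    _ = ∑ p : Cfg n q × Cfg n q, π p *
          ∑ p' : Fin n × Fin q,
          |(if p.1 p'.1 = p'.2 then (1:ℝ) else 0) - (if p.2 p'.1 = p'.2 then 1 else 0)| := by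
        rw [Finset.sum_comm]
        exact Finset.sum_congr rfl fun p _ => (Finset.mul_sum _ _ _).symm
    _ = ∑ p : Cfg n q × Cfg n q, π p * (2 * dHam p.1 p.2) := by
        refine Finset.sum_congr rfl fun p _ => ?_
        congr 1
        rw [← sum_abs_indicator p.1 p.2, Fintype.sum_prod_type]
    _ = 2 * ∑ p : Cfg n q × Cfg n q, π p * dHam p.1 p.2 := by
        rw [Finset.mul_sum]
        exact Finset.sum_congr rfl fun p _ => by ring

end SIAux

/-- contraction of a `Φ`-local family of Markov chains with respect to a
metric `γ`-equivalent to the Hamming metric implies spectral independence with constant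
`2γ²Φ/(1-κ)`. -/
theorem phiLocal_contraction_implies_SI
    {n q : ℕ} (S : SpinSystem n q) (hTC : S.TotallyConnected)
    (P : Finset (Fin n) → Cfg n q → Cfg n q → Cfg n q → ℝ)
    (hstoch : ∀ U τ, S.IsPinning U τ → IsStochastic (P U τ))
    (hstat : ∀ U τ, S.IsPinning U τ → IsStationaryMat (P U τ) (S.condMu U τ))
    (Φ : ℝ) (hΦ : PhiLocal S P Φ)
    (γ : ℝ) (hγ : 1 ≤ γ)
    (d : Cfg n q → Cfg n q → ℝ) (hd : IsMetricFn d) (hequiv : GammaEquiv γ d)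
    (κ : ℝ) (hκ0 : 0 < κ) (hκ1 : κ < 1)
    (hcon : ContractiveFam S P d κ) :
    S.SpectrallyIndependent (2 * γ ^ 2 * Φ / (1 - κ)) := by
  intro U τ hpin t φ hsupp hφne heig
  classical
  -- a maximizer of |φ|
  obtain ⟨p1, hp1⟩ := Function.ne_iff.mp hφne
  obtain ⟨p₀, -, hmax⟩ := Finset.exists_max_image Finset.univ (fun p => |φ p|)
    ⟨p1, Finset.mem_univ p1⟩
  have hφ0 : 0 < |φ p₀| := lt_of_lt_of_le (abs_pos.mpr hp1) (hmax p1 (Finset.mem_univ p1))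
  have hall : S.allowed U τ p₀.1 p₀.2 := by
    by_contra h
    rw [hsupp p₀ h] at hφ0
    simp at hφ0
  obtain ⟨hx, hma⟩ := hall
  have hγ0 : 0 < γ := lt_of_lt_of_le one_pos hγ
  have hd0 : ∀ a b : Cfg n q, 0 ≤ d a b := SIAux.metricFn_nonneg hd
  have hH0 : ∀ a b : Cfg n q, 0 ≤ dHam a b := SIAux.dHam_nonneg
  have hdle : ∀ σ1 σ2 : Cfg n q, d σ1 σ2 ≤ γ * dHam σ1 σ2 := fun σ1 σ2 => (hequiv σ1 σ2).2
  have hHle : ∀ σ1 σ2 : Cfg n q, dHam σ1 σ2 ≤ γ * d σ1 σ2 := by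
    intro σ1 σ2
    have h := (hequiv σ1 σ2).1
    have h2 := mul_le_mul_of_nonneg_left h hγ0.le
    rwa [← mul_assoc, mul_one_div, div_self hγ0.ne', one_mul] at h2
  -- a witness configuration for the extended pinning
  have hex : ∃ σ : Cfg n q, σ p₀.1 = p₀.2 ∧ 0 < S.condMu U τ σ := by
    by_contra hc
    push_neg at hc
    have hz : ∀ σ : Cfg n q, (if σ p₀.1 = p₀.2 then S.condMu U τ σ else 0) ≤ 0 := by
      intro σ
      split
      case isTrue h' => exact hc σ h'
      case isFalse => exact le_refl 0
    have hsum := Finset.sum_nonpos (fun σ (_ : σ ∈ Finset.univ) => hz σ)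
    rw [SpinSystem.margin] at hma
    linarith
  obtain ⟨σ₀, hσ₀x, hσ₀μ⟩ := hex
  have hσ₀w : 0 < S.condWt U τ σ₀ := SIAux.condWt_pos_of_condMu_pos hσ₀μ
  have hσ₀wt : 0 < S.wt σ₀ ∧ ∀ y ∈ U, σ₀ y = τ y := by
    unfold SpinSystem.condWt at hσ₀w
    split at hσ₀w
    case isTrue hag => exact ⟨hσ₀w, hag⟩
    case isFalse => exact absurd hσ₀w (lt_irrefl 0)
  have hσ₀ag' : ∀ y ∈ insert p₀.1 U, σ₀ y = Function.update τ p₀.1 p₀.2 y := by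
    intro y hy
    rcases Finset.mem_insert.mp hy with h | h
    · subst h; rw [Function.update_self]; exact hσ₀x
    · have hyx : y ≠ p₀.1 := fun e => hx (e ▸ h)
      rw [Function.update_of_ne hyx]
      exact hσ₀wt.2 y h
  have hσ₀w' : 0 < S.condWt (insert p₀.1 U) (Function.update τ p₀.1 p₀.2) σ₀ := by
    unfold SpinSystem.condWt
    rw [if_pos hσ₀ag']
    exact hσ₀wt.1
  have hpin' : S.IsPinning (insert p₀.1 U) (Function.update τ p₀.1 p₀.2) :=
    ⟨σ₀, hσ₀wt.1, hσ₀ag'⟩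
  -- probabilities
  have hμP : IsProb (S.condMu U τ) := SIAux.condMu_isProb hpin
  have hμ'P : IsProb (S.condMu (insert p₀.1 U) (Function.update τ p₀.1 p₀.2)) :=
    SIAux.condMu_isProb hpin'
  have hstU := hstoch U τ hpin
  have hstU' := hstoch (insert p₀.1 U) (Function.update τ p₀.1 p₀.2) hpin'
  have hrowP : ∀ σ : Cfg n q, IsProb (P U τ σ) := fun σ => ⟨fun s' => hstU.1 σ s', hstU.2 σ⟩
  have hrowP' : ∀ σ : Cfg n q,
      IsProb (P (insert p₀.1 U) (Function.update τ p₀.1 p₀.2) σ) :=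
    fun σ => ⟨fun s' => hstU'.1 σ s', hstU'.2 σ⟩
  have hΦ0 : 0 ≤ Φ := le_trans (SIAux.W1_nonneg hH0 _ _)
    (hΦ U τ hpin p₀.1 hx p₀.2 hma σ₀ hσ₀w')
  -- the Wasserstein contraction argument
  set μ' := S.condMu (insert p₀.1 U) (Function.update τ p₀.1 p₀.2) with hμ'def
  set μ := S.condMu U τ with hμdef
  set W := W1 d μ' μ with hWdef
  have hπne : ∃ π : Cfg n q × Cfg n q → ℝ, IsCoupling π μ' μ :=
    ⟨_, SIAux.prod_isCoupling hμ'P hμP⟩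
  have hkey : ∀ ε : ℝ, 0 < ε → W ≤ κ * W + γ * Φ + (κ + γ) * ε := by
    intro ε hε
    obtain ⟨π, hπ, hπE⟩ := SIAux.exists_coupling_close d hπne hε
    have hc : ∀ p : Cfg n q × Cfg n q, ∃ c : Cfg n q × Cfg n q → ℝ,
        IsCoupling c (P (insert p₀.1 U) (Function.update τ p₀.1 p₀.2) p.1) (P U τ p.2) ∧
        (0 < π p →
          ∑ r : Cfg n q × Cfg n q, c r * d r.1 r.2 ≤ γ * (Φ + ε) + κ * d p.1 p.2) := by
      intro p
      by_cases hp : 0 < π p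
      · have hμ'p : 0 < μ' p.1 := SIAux.coupling_fst_pos hπ hp
        have hμp : 0 < μ p.2 := SIAux.coupling_snd_pos hπ hp
        have hw1' : 0 < S.condWt (insert p₀.1 U) (Function.update τ p₀.1 p₀.2) p.1 :=
          SIAux.condWt_pos_of_condMu_pos hμ'p
        have hw1 : 0 < S.condWt U τ p.1 := SIAux.condWt_pos_of_insert hx hw1'
        have hw2 : 0 < S.condWt U τ p.2 := SIAux.condWt_pos_of_condMu_pos hμp
        have hνne : ∃ ν : Cfg n q × Cfg n q → ℝ,
            IsCoupling ν (P U τ p.1)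
              (P (insert p₀.1 U) (Function.update τ p₀.1 p₀.2) p.1) :=
          ⟨_, SIAux.prod_isCoupling (hrowP p.1) (hrowP' p.1)⟩
        obtain ⟨ν0, hν0, hν0E⟩ := SIAux.exists_coupling_close dHam hνne hε
        have hν0Φ : ∑ r : Cfg n q × Cfg n q, ν0 r * dHam r.1 r.2 < Φ + ε :=
          lt_of_lt_of_le hν0E
            (add_le_add_left (hΦ U τ hpin p₀.1 hx p₀.2 hma p.1 hw1') ε)
        have hν : IsCoupling (fun r : Cfg n q × Cfg n q => ν0 (r.2, r.1))
            (P (insert p₀.1 U) (Function.update τ p₀.1 p₀.2) p.1) (P U τ p.1) :=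
          SIAux.swap_isCoupling hν0
        have hνE : ∑ r : Cfg n q × Cfg n q, ν0 (r.2, r.1) * dHam r.1 r.2 < Φ + ε := by
          rw [SIAux.swap_expec SIAux.dHam_comm ν0]
          exact hν0Φ
        obtain ⟨ρ, hρ, hρE⟩ := hcon U τ hpin p.1 p.2 hw1 hw2
        obtain ⟨c, hcC, hcE⟩ := SIAux.glue_coupling hd hν hρ
        refine ⟨c, hcC, fun _ => ?_⟩
        have hνd : ∑ r : Cfg n q × Cfg n q, ν0 (r.2, r.1) * d r.1 r.2 ≤ γ * (Φ + ε) := by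
          calc ∑ r : Cfg n q × Cfg n q, ν0 (r.2, r.1) * d r.1 r.2
              ≤ ∑ r : Cfg n q × Cfg n q, ν0 (r.2, r.1) * (γ * dHam r.1 r.2) :=
                Finset.sum_le_sum fun r _ =>
                  mul_le_mul_of_nonneg_left (hdle _ _) (hν0.1 _)
            _ = γ * ∑ r : Cfg n q × Cfg n q, ν0 (r.2, r.1) * dHam r.1 r.2 := by
                rw [Finset.mul_sum]
                exact Finset.sum_congr rfl fun r _ => by ring
            _ ≤ γ * (Φ + ε) := mul_le_mul_of_nonneg_left hνE.le hγ0.le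
        calc ∑ r : Cfg n q × Cfg n q, c r * d r.1 r.2
            ≤ (∑ r : Cfg n q × Cfg n q, ν0 (r.2, r.1) * d r.1 r.2) +
              ∑ r : Cfg n q × Cfg n q, ρ r * d r.1 r.2 := hcE
          _ ≤ γ * (Φ + ε) + κ * d p.1 p.2 := add_le_add hνd hρE
      · exact ⟨_, SIAux.prod_isCoupling (hrowP' p.1) (hrowP p.2), fun h => absurd h hp⟩
    choose c hcC hcE using hc
    have hPiC : IsCoupling (fun r : Cfg n q × Cfg n q =>
        ∑ p : Cfg n q × Cfg n q, π p * c p r) μ' μ := by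
      refine ⟨fun r => Finset.sum_nonneg fun p _ => mul_nonneg (hπ.1 p) ((hcC p).1 r),
        ?_, ?_⟩
      · intro s
        rw [Finset.sum_comm]
        have e1 : ∀ p : Cfg n q × Cfg n q, ∑ s', π p * c p (s, s')
            = π p * P (insert p₀.1 U) (Function.update τ p₀.1 p₀.2) p.1 s := by
          intro p
          rw [← Finset.mul_sum, (hcC p).2.1 s]
        rw [Finset.sum_congr rfl fun p _ => e1 p, Fintype.sum_prod_type]
        have e2 : ∀ σ1 : Cfg n q, ∑ σ2 : Cfg n q,
            π (σ1, σ2) * P (insert p₀.1 U) (Function.update τ p₀.1 p₀.2) σ1 s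
            = μ' σ1 * P (insert p₀.1 U) (Function.update τ p₀.1 p₀.2) σ1 s := by
          intro σ1
          rw [← Finset.sum_mul, hπ.2.1 σ1]
        rw [Finset.sum_congr rfl fun σ1 _ => e2 σ1]
        exact hstat (insert p₀.1 U) (Function.update τ p₀.1 p₀.2) hpin' s
      · intro s'
        rw [Finset.sum_comm]
        have e1 : ∀ p : Cfg n q × Cfg n q, ∑ s, π p * c p (s, s')
            = π p * P U τ p.2 s' := by
          intro p
          rw [← Finset.mul_sum, (hcC p).2.2 s']
        rw [Finset.sum_congr rfl fun p _ => e1 p, Fintype.sum_prod_type, Finset.sum_comm]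
        have e2 : ∀ σ2 : Cfg n q, ∑ σ1 : Cfg n q, π (σ1, σ2) * P U τ σ2 s'
            = μ σ2 * P U τ σ2 s' := by
          intro σ2
          rw [← Finset.sum_mul, hπ.2.2 σ2]
        rw [Finset.sum_congr rfl fun σ2 _ => e2 σ2]
        exact hstat U τ hpin s'
    have hWle : W ≤ ∑ r : Cfg n q × Cfg n q,
        (∑ p : Cfg n q × Cfg n q, π p * c p r) * d r.1 r.2 :=
      SIAux.W1_le_of_coupling hd0 hPiC
    have hEPi : ∑ r : Cfg n q × Cfg n q, (∑ p : Cfg n q × Cfg n q, π p * c p r) * d r.1 r.2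
        = ∑ p : Cfg n q × Cfg n q, π p * ∑ r : Cfg n q × Cfg n q, c p r * d r.1 r.2 := by
      simp_rw [Finset.sum_mul]
      rw [Finset.sum_comm]
      refine Finset.sum_congr rfl fun p _ => ?_
      rw [Finset.mul_sum]
      exact Finset.sum_congr rfl fun r _ => by ring
    have hbound : ∑ p : Cfg n q × Cfg n q, π p * ∑ r : Cfg n q × Cfg n q, c p r * d r.1 r.2
        ≤ ∑ p : Cfg n q × Cfg n q, π p * (γ * (Φ + ε) + κ * d p.1 p.2) := by
      refine Finset.sum_le_sum fun p _ => ?_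
      rcases eq_or_lt_of_le (hπ.1 p) with h0 | hp
      · rw [← h0]; simp
      · exact mul_le_mul_of_nonneg_left (hcE p hp) (hπ.1 p)
    have htot : ∑ p : Cfg n q × Cfg n q, π p = 1 := SIAux.coupling_total hπ hμ'P.2
    have hsplit : ∑ p : Cfg n q × Cfg n q, π p * (γ * (Φ + ε) + κ * d p.1 p.2)
        = γ * (Φ + ε) + κ * ∑ p : Cfg n q × Cfg n q, π p * d p.1 p.2 := by
      have e : ∀ p : Cfg n q × Cfg n q, π p * (γ * (Φ + ε) + κ * d p.1 p.2)
          = π p * (γ * (Φ + ε)) + κ * (π p * d p.1 p.2) := fun p => by ring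
      rw [Finset.sum_congr rfl fun p _ => e p, Finset.sum_add_distrib,
        ← Finset.sum_mul, htot, one_mul, ← Finset.mul_sum]
    have hπEκ : κ * ∑ p : Cfg n q × Cfg n q, π p * d p.1 p.2 ≤ κ * (W + ε) :=
      mul_le_mul_of_nonneg_left hπE.le hκ0.le
    calc W ≤ ∑ p : Cfg n q × Cfg n q, π p * ∑ r : Cfg n q × Cfg n q, c p r * d r.1 r.2 :=
          hEPi ▸ hWle
      _ ≤ γ * (Φ + ε) + κ * ∑ p : Cfg n q × Cfg n q, π p * d p.1 p.2 :=
          hsplit ▸ hbound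
      _ ≤ γ * (Φ + ε) + κ * (W + ε) := by linarith
      _ = κ * W + γ * Φ + (κ + γ) * ε := by ring
  have hWκ : W ≤ κ * W + γ * Φ := by
    refine le_of_forall_pos_le_add fun ε hε => ?_
    have hκγ : 0 < κ + γ := by linarith
    have h := hkey (ε / (κ + γ)) (div_pos hε hκγ)
    calc W ≤ κ * W + γ * Φ + (κ + γ) * (ε / (κ + γ)) := h
      _ = κ * W + γ * Φ + ε := by field_simp
  have h1κ : 0 < 1 - κ := by linarith
  have hWfin : W ≤ γ * Φ / (1 - κ) := by
    rw [le_div_iff₀ h1κ]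
    nlinarith
  -- from Wasserstein to the influence row sum
  have hWHam : W1 dHam μ' μ ≤ γ * W := by
    have hlow : W1 dHam μ' μ / γ ≤ W := by
      refine SIAux.le_W1 hπne fun π hπc => ?_
      have h1 : W1 dHam μ' μ ≤ ∑ p : Cfg n q × Cfg n q, π p * dHam p.1 p.2 :=
        SIAux.W1_le_of_coupling hH0 hπc
      have h2 : ∑ p : Cfg n q × Cfg n q, π p * dHam p.1 p.2
          ≤ γ * ∑ p : Cfg n q × Cfg n q, π p * d p.1 p.2 := by
        rw [Finset.mul_sum]
        refine Finset.sum_le_sum fun p _ => ?_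
        calc π p * dHam p.1 p.2 ≤ π p * (γ * d p.1 p.2) :=
              mul_le_mul_of_nonneg_left (hHle _ _) (hπc.1 p)
          _ = γ * (π p * d p.1 p.2) := by ring
      rw [div_le_iff₀ hγ0]
      calc W1 dHam μ' μ ≤ γ * ∑ p : Cfg n q × Cfg n q, π p * d p.1 p.2 := h1.trans h2
        _ = (∑ p : Cfg n q × Cfg n q, π p * d p.1 p.2) * γ := mul_comm _ _
    calc W1 dHam μ' μ = W1 dHam μ' μ / γ * γ := by field_simp
      _ ≤ W * γ := mul_le_mul_of_nonneg_right hlow hγ0.le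
      _ = γ * W := mul_comm _ _
  have hrowsum : ∑ p' : Fin n × Fin q, |S.Jmat U τ p₀ p'| ≤ 2 * W1 dHam μ' μ := by
    have hJle : ∀ p' : Fin n × Fin q, |S.Jmat U τ p₀ p'| ≤
        |S.margin (insert p₀.1 U) (Function.update τ p₀.1 p₀.2) p'.1 p'.2
          - S.margin U τ p'.1 p'.2| := by
      intro p'
      unfold SpinSystem.Jmat
      split
      · rw [abs_zero]; exact abs_nonneg _
      · split
        · exact le_refl _
        · rw [abs_zero]; exact abs_nonneg _
    have hDle : ∑ p' : Fin n × Fin q,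
        |S.margin (insert p₀.1 U) (Function.update τ p₀.1 p₀.2) p'.1 p'.2
          - S.margin U τ p'.1 p'.2| ≤ 2 * W1 dHam μ' μ := by
      have hhalf : (∑ p' : Fin n × Fin q,
          |S.margin (insert p₀.1 U) (Function.update τ p₀.1 p₀.2) p'.1 p'.2
            - S.margin U τ p'.1 p'.2|) / 2 ≤ W1 dHam μ' μ := by
        refine SIAux.le_W1 hπne fun π hπc => ?_
        have := SIAux.margin_diff_bound S U (insert p₀.1 U) τ
          (Function.update τ p₀.1 p₀.2) hπc
        linarith
      linarith
    calc ∑ p' : Fin n × Fin q, |S.Jmat U τ p₀ p'|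
        ≤ ∑ p' : Fin n × Fin q,
          |S.margin (insert p₀.1 U) (Function.update τ p₀.1 p₀.2) p'.1 p'.2
            - S.margin U τ p'.1 p'.2| := Finset.sum_le_sum fun p' _ => hJle p'
      _ ≤ 2 * W1 dHam μ' μ := hDle
  have hRfin : ∑ p' : Fin n × Fin q, |S.Jmat U τ p₀ p'| ≤ 2 * γ ^ 2 * Φ / (1 - κ) := by
    have h1 : W1 dHam μ' μ ≤ γ * (γ * Φ / (1 - κ)) :=
      hWHam.trans (mul_le_mul_of_nonneg_left hWfin hγ0.le)
    have h2 : 2 * (γ * (γ * Φ / (1 - κ))) = 2 * γ ^ 2 * Φ / (1 - κ) := by ring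
    calc ∑ p' : Fin n × Fin q, |S.Jmat U τ p₀ p'| ≤ 2 * W1 dHam μ' μ := hrowsum
      _ ≤ 2 * (γ * (γ * Φ / (1 - κ))) := by linarith
      _ = 2 * γ ^ 2 * Φ / (1 - κ) := h2
  have habs : |t| ≤ ∑ p' : Fin n × Fin q, |S.Jmat U τ p₀ p'| := by
    have h1 : |t| * |φ p₀| = |∑ p' : Fin n × Fin q, S.Jmat U τ p₀ p' * φ p'| := by
      rw [heig p₀, abs_mul]
    have h2 : |∑ p' : Fin n × Fin q, S.Jmat U τ p₀ p' * φ p'|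
        ≤ (∑ p' : Fin n × Fin q, |S.Jmat U τ p₀ p'|) * |φ p₀| := by
      rw [Finset.sum_mul]
      refine (Finset.abs_sum_le_sum_abs _ _).trans (Finset.sum_le_sum fun p' _ => ?_)
      rw [abs_mul]
      exact mul_le_mul_of_nonneg_left (hmax p' (Finset.mem_univ _)) (abs_nonneg _)
    have h3 : |t| * |φ p₀| ≤ (∑ p' : Fin n × Fin q, |S.Jmat U τ p₀ p'|) * |φ p₀| :=
      h1 ▸ h2
    exact le_of_mul_le_mul_right h3 hφ0
  exact le_trans (le_abs_self t) (habs.trans hRfin)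
end
end
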